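/- arXiv:2403.13200 — 12 statements merged into one kernel-verified Lean document; each statement's English description precedes it below -/
import Mathlib

section
/- Let G = C12 ⊕ C4, g1 = (1,1), g2 = (1,2). The element [8,4] is a group atom in the block monoid B(g1,g2): it cannot be written as an integral linear combination of elements of B(g1,g2) each of length strictly smaller than 12. -/
open Finset

/-- `m` belongs to the block monoid `B(g 0, …, g (k-1))`:
its coordinates give a zero-sum combination of the `g i`. -/
def IsBlock {G : Type*} [AddCommGroup G] {k : ℕ} (g : Fin k → G) (m : Fin k → ℕ) : Prop :=
  ∑ i, (m i) • g i = 0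

/-- `m` is a group atom in `B(g)`: it lies in `B(g)` and cannot be written as an
integral linear combination of elements of `B(g)` of strictly smaller length. -/
def IsGroupAtom {G : Type*} [AddCommGroup G] {k : ℕ} (g : Fin k → G) (m : Fin k → ℕ) : Prop :=
  IsBlock g m ∧
  ¬ ∃ (t : ℕ) (lam : Fin t → ℤ) (q : Fin t → Fin k → ℕ),
      (∀ j, IsBlock g (q j) ∧ ∑ i, q j i < ∑ i, m i) ∧
      (∀ i, (m i : ℤ) = ∑ j, lam j * (q j i : ℤ))

theorem stmt_1 :
    IsGroupAtom (G := ZMod 12 × ZMod 4) ![(1, 1), (1, 2)] ![8, 4] := by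
  constructor
  · show _ = _
    decide
  · rintro ⟨t, lam, q, hq, heq⟩
    have hz : ∀ j, q j 0 = 0 := by
      intro j
      obtain ⟨hb, hl⟩ := hq j
      have hb1 : ((q j 0 + q j 1 : ℕ) : ZMod 12) = 0 := by
        have := congrArg Prod.fst hb
        simpa [IsBlock, Fin.sum_univ_two, nsmul_eq_mul] using this
      have hdvd : 12 ∣ q j 0 + q j 1 := (ZMod.natCast_eq_zero_iff _ _).mp hb1
      have hlt : q j 0 + q j 1 < 12 := by
        simpa [Fin.sum_univ_two] using hl
      have : q j 0 + q j 1 = 0 := Nat.eq_zero_of_dvd_of_lt hdvd hlt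
      omega
    have h8 := heq 0
    simp [hz] at h8
end

section
/- Let G = C12 ⊕ C4, g0 = (8,0), g1 = (1,1), g2 = (1,2). The element [0,8,4] is NOT a group atom in B(g0,g1,g2); in fact [0,8,4] = 2·[2,4,4] − [4,0,4], where [2,4,4] and [4,0,4] lie in B(g0,g1,g2) and have length strictly smaller than 12. -/
open Finset

theorem stmt_2 :
    ¬ IsGroupAtom (G := ZMod 12 × ZMod 4) ![(8, 0), (1, 1), (1, 2)] ![0, 8, 4] ∧
    IsBlock (G := ZMod 12 × ZMod 4) ![(8, 0), (1, 1), (1, 2)] ![2, 4, 4] ∧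
    IsBlock (G := ZMod 12 × ZMod 4) ![(8, 0), (1, 1), (1, 2)] ![4, 0, 4] ∧
    (∑ i, (![2, 4, 4] : Fin 3 → ℕ) i) < 12 ∧
    (∑ i, (![4, 0, 4] : Fin 3 → ℕ) i) < 12 ∧
    (∀ i : Fin 3, ((![0, 8, 4] : Fin 3 → ℕ) i : ℤ) =
      2 * ((![2, 4, 4] : Fin 3 → ℕ) i : ℤ) - ((![4, 0, 4] : Fin 3 → ℕ) i : ℤ)) := by
  have hb1 : IsBlock (G := ZMod 12 × ZMod 4) ![(8, 0), (1, 1), (1, 2)] ![2, 4, 4] := by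
    simp [IsBlock, Fin.sum_univ_three]; decide
  have hb2 : IsBlock (G := ZMod 12 × ZMod 4) ![(8, 0), (1, 1), (1, 2)] ![4, 0, 4] := by
    simp [IsBlock, Fin.sum_univ_three]; decide
  refine ⟨?_, hb1, hb2, by decide, by decide, by decide⟩
  intro ⟨_, hno⟩
  exact hno ⟨2, ![2, -1], ![![2, 4, 4], ![4, 0, 4]],
    by intro j; fin_cases j <;> exact ⟨by assumption, by decide⟩,
    by intro i; fin_cases i <;> simp [Fin.sum_univ_two]⟩
end

section
/- Let G be a finite abelian group of odd order, g1,…,gk ∈ G, and m ∈ B(g1,…,gk). Suppose there exist integers λ1,…,λt, elements q1,…,qt ∈ B(g1,…,gk) with |qj| < |m| for all j, and ε ∈ {1,−1}, such that b := λ1·q1 + … + λt·qt + ε·m lies in B(g1,…,gk), all coordinates of b are even, and |b| < 2|m|. Then m is not a group atom in B(g1,…,gk). -/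
open Finset

theorem stmt_4 {G : Type*} [AddCommGroup G] [Fintype G] (hodd : Odd (Fintype.card G))
    {k : ℕ} (g : Fin k → G) (m : Fin k → ℕ) (hm : IsBlock g m)
    (t : ℕ) (lam : Fin t → ℤ) (q : Fin t → Fin k → ℕ)
    (hq : ∀ j, IsBlock g (q j) ∧ ∑ i, q j i < ∑ i, m i)
    (ε : ℤ) (hε : ε = 1 ∨ ε = -1) (b : Fin k → ℕ)
    (hbdef : ∀ i, (b i : ℤ) = (∑ j, lam j * (q j i : ℤ)) + ε * (m i : ℤ))
    (hbB : IsBlock g b) (hbeven : ∀ i, Even (b i))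
    (hblen : ∑ i, b i < 2 * ∑ i, m i) :
    ¬ IsGroupAtom g m := by
  rintro ⟨-, hno⟩
  apply hno
  set c : Fin k → ℕ := fun i => b i / 2 with hc
  have h2c : ∀ i, 2 * c i = b i := fun i => Nat.two_mul_div_two_of_even (hbeven i)
  -- c is a block
  have hcB : IsBlock g c := by
    have hx : (2 : ℕ) • (∑ i, c i • g i) = 0 := by
      rw [smul_sum]
      have : ∀ i ∈ univ, (2 : ℕ) • c i • g i = b i • g i := by
        intro i _
        rw [← mul_smul, h2c]
      rw [sum_congr rfl this]
      exact hbB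
    have hdvd2 : addOrderOf (∑ i, c i • g i) ∣ 2 := addOrderOf_dvd_of_nsmul_eq_zero hx
    have hdvdc : addOrderOf (∑ i, c i • g i) ∣ Fintype.card G := addOrderOf_dvd_card
    have hcop : Nat.Coprime 2 (Fintype.card G) := Nat.coprime_two_left.mpr hodd
    have : addOrderOf (∑ i, c i • g i) = 1 :=
      Nat.eq_one_of_dvd_coprimes hcop hdvd2 hdvdc
    exact AddMonoid.addOrderOf_eq_one_iff.mp this
  have hclen : ∑ i, c i < ∑ i, m i := by
    have : 2 * ∑ i, c i < 2 * ∑ i, m i := by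
      rw [mul_sum]
      calc ∑ i, 2 * c i = ∑ i, b i := by simp [h2c]
        _ < 2 * ∑ i, m i := hblen
    omega
  have hε2 : ε * ε = 1 := by rcases hε with h | h <;> simp [h]
  refine ⟨t + 1, Fin.cons (2 * ε) (fun j => -ε * lam j), Fin.cons c q, ?_, ?_⟩
  · intro j
    refine Fin.cases ?_ ?_ j
    · exact ⟨hcB, hclen⟩
    · intro j'; simpa using hq j'
  · intro i
    rw [Fin.sum_univ_succ]
    simp only [Fin.cons_succ, Fin.cons_zero]
    have hb := hbdef i
    have : (2 : ℤ) * (c i : ℤ) = (b i : ℤ) := by exact_mod_cast h2c i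
    have hsum : ∑ j, (-ε * lam j) * (q j i : ℤ) = -ε * ∑ j, lam j * (q j i : ℤ) := by
      rw [mul_sum]; exact sum_congr rfl fun j _ => by ring
    rw [hsum]
    rcases hε with rfl | rfl <;> linarith [hb, this]
end

section
/- Let G be a finite abelian group, g1,…,gk ∈ G, and let m be a group atom in B(g1,…,gk) with |m| > max{ord(gi) : i = 1,…,k}. Then 2|m| ≤ Σ_{i=1}^k ord(gi). -/
open Finset

theorem stmt_5 {G : Type*} [AddCommGroup G] [Fintype G]
    {k : ℕ} (g : Fin k → G) (m : Fin k → ℕ) (hm : IsGroupAtom g m)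
    (hlen : ∀ i, addOrderOf (g i) < ∑ i, m i) :
    2 * ∑ i, m i ≤ ∑ i, addOrderOf (g i) := by
  obtain ⟨hb, hatom⟩ := hm
  have hpos : ∀ i, 0 < addOrderOf (g i) := fun i => addOrderOf_pos (g i)
  set u : Fin k → Fin k → ℕ := fun j i => if i = j then addOrderOf (g j) else 0 with hu
  have hublock : ∀ j, IsBlock g (u j) := by
    intro j
    unfold IsBlock
    rw [Fintype.sum_eq_single j]
    · simp [hu, addOrderOf_nsmul_eq_zero]
    · intro i hi; simp [hu, hi]
  have husum : ∀ j, ∑ i, u j i = addOrderOf (g j) := by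
    intro j; simp [hu]
  -- Step 1: m i ≤ addOrderOf (g i)
  have hle : ∀ i, m i ≤ addOrderOf (g i) := by
    intro j
    by_contra h
    push_neg at h
    apply hatom
    have huj : ∀ i, u j i ≤ m i := by
      intro i
      by_cases hij : i = j
      · subst hij; simp [hu]; omega
      · simp [hu, hij]
    refine ⟨2, Fin.cons 1 (fun _ => 1), Fin.cons (fun i => m i - u j i) (fun _ => u j),
      ?_, ?_⟩
    · intro t
      refine Fin.cases ?_ ?_ t
      · rw [Fin.cons_zero]
        constructor
        · unfold IsBlock
          have hsub : ∀ i, (m i - u j i) • g i = m i • g i - u j i • g i := by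
            intro i
            rw [sub_nsmul _ (huj i), sub_eq_add_neg]
          rw [Finset.sum_congr rfl (fun i _ => hsub i), Finset.sum_sub_distrib, hb,
            hublock j, sub_zero]
        · have key : ∑ i, (m i - u j i) + ∑ i, u j i = ∑ i, m i := by
            rw [← Finset.sum_add_distrib]
            exact Finset.sum_congr rfl fun i _ => Nat.sub_add_cancel (huj i)
          have := husum j
          have := hpos j
          omega
      · intro t'
        rw [Fin.cons_succ]
        refine ⟨hublock j, ?_⟩
        rw [husum j]; exact hlen j
    · intro i
      rw [Fin.sum_univ_succ, Fin.sum_univ_one]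
      simp only [Fin.cons_zero, Fin.cons_succ]
      push_cast [Nat.cast_sub (huj i)]
      ring
  -- Step 2: the complementary block
  set n : Fin k → ℕ := fun i => addOrderOf (g i) - m i with hn
  have hnblock : IsBlock g n := by
    unfold IsBlock
    have hsub : ∀ i, n i • g i = addOrderOf (g i) • g i - m i • g i := by
      intro i
      rw [hn, sub_nsmul _ (hle i), sub_eq_add_neg]
    rw [Finset.sum_congr rfl (fun i _ => hsub i), Finset.sum_sub_distrib, hb, sub_zero]
    simp [addOrderOf_nsmul_eq_zero]
  have hsumsplit : ∑ i, n i + ∑ i, m i = ∑ i, addOrderOf (g i) := by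
    rw [← Finset.sum_add_distrib]
    exact Finset.sum_congr rfl fun i _ => Nat.sub_add_cancel (hle i)
  by_contra hcon
  push_neg at hcon
  have hnlt : ∑ i, n i < ∑ i, m i := by omega
  apply hatom
  refine ⟨k + 1, Fin.cons (-1) (fun _ => 1), Fin.cons n u, ?_, ?_⟩
  · intro j
    refine Fin.cases ?_ ?_ j
    · exact ⟨hnblock, hnlt⟩
    · intro j'
      refine ⟨hublock j', ?_⟩
      rw [Fin.cons_succ, husum j']
      exact hlen j'
  · intro i
    rw [Fin.sum_univ_succ]
    simp only [Fin.cons_zero, Fin.cons_succ]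
    have : ∑ j : Fin k, (1 : ℤ) * (u j i : ℤ) = (addOrderOf (g i) : ℤ) := by
      simp [hu, Finset.sum_ite_eq]
    rw [this]
    push_cast [hn, Nat.cast_sub (hle i)]
    ring
end

section
/- Let G be a finite abelian group, g1, g2 ∈ G, and let m be a group atom in B(g1,g2) with both coordinates nonzero. Then |m| ≤ max{ord(g1), ord(g2), (ord(g1)+ord(g2))/2}. -/
open Finset

theorem stmt_6 {G : Type*} [AddCommGroup G] [Fintype G]
    (g1 g2 : G) (m : Fin 2 → ℕ) (hm : IsGroupAtom ![g1, g2] m)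
    (h0 : m 0 ≠ 0) (h1 : m 1 ≠ 0) :
    m 0 + m 1 ≤
      max (max (addOrderOf g1) (addOrderOf g2)) ((addOrderOf g1 + addOrderOf g2) / 2) := by
  obtain ⟨hb, hat⟩ := hm
  set d1 := addOrderOf g1 with hd1def
  set d2 := addOrderOf g2 with hd2def
  have hd1 : d1 • g1 = 0 := addOrderOf_nsmul_eq_zero g1
  have hd2 : d2 • g2 = 0 := addOrderOf_nsmul_eq_zero g2
  have hd1pos : 0 < d1 := addOrderOf_pos g1
  have hd2pos : 0 < d2 := addOrderOf_pos g2
  have hb' : m 0 • g1 + m 1 • g2 = 0 := by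
    simpa [IsBlock, Fin.sum_univ_two] using hb
  by_contra hcon
  push_neg at hcon
  have h1' : d1 < m 0 + m 1 := lt_of_le_of_lt (le_max_of_le_left (le_max_left _ _)) hcon
  have h2' : d2 < m 0 + m 1 := lt_of_le_of_lt (le_max_of_le_left (le_max_right _ _)) hcon
  have h3' : (d1 + d2) / 2 < m 0 + m 1 := lt_of_le_of_lt (le_max_right _ _) hcon
  have hsum : d1 + d2 < 2 * (m 0 + m 1) := by omega
  apply hat
  by_cases hc1 : d1 ≤ m 0
  · refine ⟨2, ![1, 1], ![![m 0 - d1, m 1], ![d1, 0]], ?_, ?_⟩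
    · intro j
      fin_cases j
      · constructor
        · have h := hb'
          have : (m 0 - d1 + d1) • g1 + m 1 • g2 = 0 := by
            rw [Nat.sub_add_cancel hc1]; exact hb'
          rw [add_nsmul, hd1, add_zero] at this
          simpa [IsBlock, Fin.sum_univ_two] using this
        · simp [Fin.sum_univ_two]
          omega
      · constructor
        · simpa [IsBlock, Fin.sum_univ_two] using hd1
        · simp [Fin.sum_univ_two]
          omega
    · intro i
      fin_cases i <;> simp [Fin.sum_univ_two] <;> omega
  · by_cases hc2 : d2 ≤ m 1
    · refine ⟨2, ![1, 1], ![![m 0, m 1 - d2], ![0, d2]], ?_, ?_⟩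
      · intro j
        fin_cases j
        · constructor
          · have : m 0 • g1 + (m 1 - d2 + d2) • g2 = 0 := by
              rw [Nat.sub_add_cancel hc2]; exact hb'
            rw [add_nsmul, hd2, add_zero] at this
            simpa [IsBlock, Fin.sum_univ_two] using this
          · simp [Fin.sum_univ_two]
            omega
        · constructor
          · simpa [IsBlock, Fin.sum_univ_two] using hd2
          · simp [Fin.sum_univ_two]
            omega
      · intro i
        fin_cases i <;> simp [Fin.sum_univ_two] <;> omega
    · push_neg at hc1 hc2
      refine ⟨3, ![1, 1, -1], ![![d1, 0], ![0, d2], ![d1 - m 0, d2 - m 1]], ?_, ?_⟩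
      · intro j
        fin_cases j
        · exact ⟨by simpa [IsBlock, Fin.sum_univ_two] using hd1,
            by simp [Fin.sum_univ_two]; omega⟩
        · exact ⟨by simpa [IsBlock, Fin.sum_univ_two] using hd2,
            by simp [Fin.sum_univ_two]; omega⟩
        · constructor
          · have : (d1 - m 0 + m 0) • g1 + (d2 - m 1 + m 1) • g2 = 0 := by
              rw [Nat.sub_add_cancel hc1.le, Nat.sub_add_cancel hc2.le, hd1, hd2, add_zero]
            rw [add_nsmul, add_nsmul] at this
            have : ((d1 - m 0) • g1 + (d2 - m 1) • g2) + (m 0 • g1 + m 1 • g2) = 0 := by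
              rw [← this]; abel
            rw [hb', add_zero] at this
            simpa [IsBlock, Fin.sum_univ_two] using this
          · simp [Fin.sum_univ_two]
            omega
      · intro i
        fin_cases i <;> simp [Fin.sum_univ_three] <;> omega
end

section
/- Let G be a finite abelian group, g1,g2,g3 ∈ G with ord(g1) ≥ ord(g2) ≥ ord(g3), and let κ > 1 be an integer dividing each ord(gi) such that hi := (ord(gi)/κ)·gi generates the same cyclic subgroup H of order κ for i = 1,2,3. If u = [u1,u2,u3] ∈ B(h1,h2,h3), then uκ := [u1·ord(g1)/κ, u2·ord(g2)/κ, u3·ord(g3)/κ] belongs to B(g1,g2,g3), and |uκ| ≤ (ord(g1)/κ)·|u|. -/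
open Finset

theorem stmt_7 {G : Type*} [AddCommGroup G] [Fintype G]
    (g : Fin 3 → G)
    (hord : addOrderOf (g 0) ≥ addOrderOf (g 1) ∧ addOrderOf (g 1) ≥ addOrderOf (g 2))
    (κ : ℕ) (hκ : 1 < κ) (hdvd : ∀ i, κ ∣ addOrderOf (g i))
    (h : Fin 3 → G) (hh : ∀ i, h i = (addOrderOf (g i) / κ) • g i)
    (hordh : ∀ i, addOrderOf (h i) = κ)
    (hsame : ∀ i j, AddSubgroup.zmultiples (h i) = AddSubgroup.zmultiples (h j))
    (u : Fin 3 → ℕ) (hu : IsBlock h u) :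
    IsBlock g (fun i => u i * (addOrderOf (g i) / κ)) ∧
    (∑ i, u i * (addOrderOf (g i) / κ)) ≤ (addOrderOf (g 0) / κ) * ∑ i, u i := by
  constructor
  · unfold IsBlock at hu ⊢
    rw [← hu]
    refine Finset.sum_congr rfl fun i _ => ?_
    rw [hh i, mul_smul]
  · rw [Finset.mul_sum]
    refine Finset.sum_le_sum fun i _ => ?_
    rw [mul_comm]
    refine Nat.mul_le_mul_right _ (Nat.div_le_div_right ?_)
    fin_cases i
    · exact le_refl _
    · exact hord.1
    · exact le_trans hord.2 hord.1
end

section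
/- Let G be a finite abelian group, g1,g2,g3 ∈ G with ord(g1) ≥ ord(g2) ≥ ord(g3), and suppose there is an integer κ > 1 such that hi := (ord(gi)/κ)·gi has order κ for each i and all three hi generate a common cyclic subgroup H ≤ ⟨g1⟩∩⟨g2⟩∩⟨g3⟩ of order κ. Let m = [m1,m2,m3] be a group atom in B(g1,g2,g3) with |m| > ord(g1), and define ai ∈ {0,…,κ−1} by ai·(ord(gi)/κ) ≤ mi < (ai+1)·(ord(gi)/κ). Then a1 + a2 + a3 ≤ κ − 1. -/
open Finset

theorem stmt_8 {G : Type*} [AddCommGroup G] [Fintype G]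
    (g : Fin 3 → G)
    (hord : addOrderOf (g 0) ≥ addOrderOf (g 1) ∧ addOrderOf (g 1) ≥ addOrderOf (g 2))
    (κ : ℕ) (hκ : 1 < κ) (hdvd : ∀ i, κ ∣ addOrderOf (g i))
    (h : Fin 3 → G) (hh : ∀ i, h i = (addOrderOf (g i) / κ) • g i)
    (hordh : ∀ i, addOrderOf (h i) = κ)
    (hsame : ∀ i j, AddSubgroup.zmultiples (h i) = AddSubgroup.zmultiples (h j))
    (m : Fin 3 → ℕ) (hm : IsGroupAtom g m) (hlen : addOrderOf (g 0) < ∑ i, m i)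
    (a : Fin 3 → ℕ) (ha : ∀ i, a i < κ)
    (haineq : ∀ i, a i * (addOrderOf (g i) / κ) ≤ m i ∧
      m i < (a i + 1) * (addOrderOf (g i) / κ)) :
    a 0 + a 1 + a 2 ≤ κ - 1 := by
  by_contra hcon
  push_neg at hcon
  have hκsum : κ ≤ a 0 + a 1 + a 2 := by omega
  set d : Fin 3 → ℕ := fun i => addOrderOf (g i) / κ with hd
  have hdpos : ∀ i, 0 < d i := fun i =>
    Nat.div_pos (Nat.le_of_dvd (addOrderOf_pos _) (hdvd i)) (by omega)
  have hdle : ∀ i, d i ≤ d 0 := by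
    intro i
    fin_cases i
    · exact le_rfl
    · exact Nat.div_le_div_right hord.1
    · exact Nat.div_le_div_right (le_trans hord.2 hord.1)
  have hκd : κ * d 0 = addOrderOf (g 0) := Nat.mul_div_cancel' (hdvd 0)
  -- partial-sum counts
  set c : ℕ → Fin 3 → ℕ :=
    fun t => ![min t (a 0), min (t - a 0) (a 1), min (t - a 0 - a 1) (a 2)] with hc
  have hc0 : ∀ t, c t 0 = min t (a 0) := fun t => rfl
  have hc1 : ∀ t, c t 1 = min (t - a 0) (a 1) := fun t => rfl
  have hc2 : ∀ t, c t 2 = min (t - a 0 - a 1) (a 2) := fun t => rfl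
  have hcle : ∀ t i, c t i ≤ a i := by
    intro t i; fin_cases i <;> simp [hc] <;> omega
  have hcmono : ∀ s t : ℕ, s ≤ t → ∀ i, c s i ≤ c t i := by
    intro s t hst i; fin_cases i <;> simp [hc] <;> omega
  have hcsum : ∀ t, c t 0 + c t 1 + c t 2 = min t (a 0 + a 1 + a 2) := by
    intro t; simp [hc]; omega
  have hmem : ∀ t : ℕ, (∑ i, c t i • h i) ∈ AddSubgroup.zmultiples (h 0) := by
    intro t
    refine AddSubgroup.sum_mem _ (fun i _ => AddSubgroup.nsmul_mem _ ?_ _)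
    rw [← hsame i 0]
    exact AddSubgroup.mem_zmultiples _
  haveI : Fintype ↥(AddSubgroup.zmultiples (h 0)) := Fintype.ofFinite _
  have hcard : Fintype.card ↥(AddSubgroup.zmultiples (h 0)) = κ := by
    rw [← Nat.card_eq_fintype_card, Nat.card_zmultiples, hordh]
  obtain ⟨u, v, huv, hequv⟩ :
      ∃ u v : Fin (κ + 1), (u : ℕ) < (v : ℕ) ∧
        (∑ i, c u i • h i) = (∑ i, c v i • h i) := by
    obtain ⟨x, y, hxy, hfeq⟩ := Fintype.exists_ne_map_eq_of_card_lt
      (fun t : Fin (κ + 1) =>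
        (⟨∑ i, c (t : ℕ) i • h i, hmem _⟩ : ↥(AddSubgroup.zmultiples (h 0))))
      (by simp [hcard])
    have hval : (∑ i, c (x : ℕ) i • h i) = (∑ i, c (y : ℕ) i • h i) :=
      congrArg Subtype.val hfeq
    rcases lt_or_gt_of_ne (fun hxyv : (x : ℕ) = (y : ℕ) => hxy (Fin.ext hxyv)) with hl | hl
    · exact ⟨x, y, hl, hval⟩
    · exact ⟨y, x, hl, hval.symm⟩
  set b : Fin 3 → ℕ := fun i => c (v : ℕ) i - c (u : ℕ) i with hb
  have hble : ∀ i, b i ≤ a i := fun i => le_trans (Nat.sub_le _ _) (hcle _ i)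
  have hbh : ∑ i, b i • h i = 0 := by
    have key : ∑ i, b i • h i + ∑ i, c (u : ℕ) i • h i = ∑ i, c (v : ℕ) i • h i := by
      rw [← Finset.sum_add_distrib]
      refine Finset.sum_congr rfl (fun i _ => ?_)
      rw [← add_nsmul, hb, Nat.sub_add_cancel (hcmono _ _ (le_of_lt huv) i)]
    rw [← hequv] at key
    exact add_right_cancel (key.trans (zero_add _).symm)
  have hvle : (v : ℕ) ≤ κ := by omega
  have hbsum : b 0 + b 1 + b 2 = (v : ℕ) - (u : ℕ) := by
    have h1 := hcsum (u : ℕ); have h2 := hcsum (v : ℕ)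
    have h3 := hcmono _ _ (le_of_lt huv) 0
    have h4 := hcmono _ _ (le_of_lt huv) 1
    have h5 := hcmono _ _ (le_of_lt huv) 2
    simp only [hb]
    omega
  have hbsumpos : 1 ≤ b 0 + b 1 + b 2 := by omega
  have hbsumle : b 0 + b 1 + b 2 ≤ κ := by omega
  -- the two blocks
  set q0 : Fin 3 → ℕ := fun i => b i * d i with hq0
  have hq0le : ∀ i, q0 i ≤ m i := fun i =>
    le_trans (Nat.mul_le_mul_right _ (hble i)) (haineq i).1
  have hblock0 : IsBlock g q0 := by
    unfold IsBlock
    have key : ∀ i, q0 i • g i = b i • h i := by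
      intro i
      simp only [hq0]
      rw [hh i, mul_comm, mul_nsmul]
    simp only [key, hbh]
  have hblock1 : IsBlock g (fun i => m i - q0 i) := by
    unfold IsBlock
    have key : ∑ i, (m i - q0 i) • g i + ∑ i, q0 i • g i = ∑ i, m i • g i := by
      rw [← Finset.sum_add_distrib]
      refine Finset.sum_congr rfl (fun i _ => ?_)
      rw [← add_nsmul, Nat.sub_add_cancel (hq0le i)]
    have hmblock := hm.1
    unfold IsBlock at hmblock
    rw [hmblock] at key
    unfold IsBlock at hblock0
    rw [hblock0, add_zero] at key
    exact key
  have hq0len : ∑ i, q0 i < ∑ i, m i := by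
    have : ∑ i, q0 i ≤ κ * d 0 := by
      rw [Fin.sum_univ_three]
      calc q0 0 + q0 1 + q0 2 ≤ b 0 * d 0 + b 1 * d 0 + b 2 * d 0 := by
            simp only [hq0]
            exact add_le_add (add_le_add (le_rfl)
              (Nat.mul_le_mul_left _ (hdle 1))) (Nat.mul_le_mul_left _ (hdle 2))
        _ = (b 0 + b 1 + b 2) * d 0 := by ring
        _ ≤ κ * d 0 := Nat.mul_le_mul_right _ hbsumle
    omega
  have hq0pos : 1 ≤ ∑ i, q0 i := by
    rw [Fin.sum_univ_three]
    have e0 := hdpos 0; have e1 := hdpos 1; have e2 := hdpos 2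
    have : b 0 ≤ q0 0 := Nat.le_mul_of_pos_right _ (hdpos 0)
    have : b 1 ≤ q0 1 := Nat.le_mul_of_pos_right _ (hdpos 1)
    have : b 2 ≤ q0 2 := Nat.le_mul_of_pos_right _ (hdpos 2)
    simp only [hq0] at *
    nlinarith
  have hq1len : ∑ i, (m i - q0 i) < ∑ i, m i := by
    have h0 := hq0le 0; have h1 := hq0le 1; have h2 := hq0le 2
    simp only [Fin.sum_univ_three] at hq0len hq0pos ⊢
    omega
  refine hm.2 ⟨2, ![1, 1], ![q0, fun i => m i - q0 i], ?_, ?_⟩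
  · intro j
    fin_cases j
    · exact ⟨hblock0, hq0len⟩
    · exact ⟨hblock1, hq1len⟩
  · intro i
    rw [Fin.sum_univ_two]
    simp only [Matrix.cons_val_zero, Matrix.cons_val_one, Matrix.head_cons]
    have := hq0le i
    push_cast [Nat.cast_sub this]
    ring
end

section
/- Let G be a finite abelian group, g1,g2,g3 ∈ G with ord(g1) ≥ ord(g2) ≥ ord(g3), and suppose there is an integer κ > 1 such that hi := (ord(gi)/κ)·gi has order κ for each i and all three hi generate a common cyclic subgroup of order κ. If m is a group atom in B(g1,g2,g3) with |m| > ord(g1), then κ ≠ 2 and moreover 2|m| + ord(g2)/κ + (κ−2)·ord(g3)/κ ≤ ord(g1) + ord(g2) + ord(g3). -/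
open Finset

theorem stmt_9 {G : Type*} [AddCommGroup G] [Fintype G]
    (g : Fin 3 → G)
    (hord : addOrderOf (g 0) ≥ addOrderOf (g 1) ∧ addOrderOf (g 1) ≥ addOrderOf (g 2))
    (κ : ℕ) (hκ : 1 < κ) (hdvd : ∀ i, κ ∣ addOrderOf (g i))
    (h : Fin 3 → G) (hh : ∀ i, h i = (addOrderOf (g i) / κ) • g i)
    (hordh : ∀ i, addOrderOf (h i) = κ)
    (hsame : ∀ i j, AddSubgroup.zmultiples (h i) = AddSubgroup.zmultiples (h j))
    (m : Fin 3 → ℕ) (hm : IsGroupAtom g m) (hlen : addOrderOf (g 0) < ∑ i, m i) :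
    κ ≠ 2 ∧
    2 * (∑ i, m i) + addOrderOf (g 1) / κ + (κ - 2) * (addOrderOf (g 2) / κ) ≤
      addOrderOf (g 0) + addOrderOf (g 1) + addOrderOf (g 2) := by
  obtain ⟨hb, hatom⟩ := hm
  have hκpos : 0 < κ := by omega
  -- ν i = addOrderOf (g i) / κ
  obtain ⟨ν, hνdef⟩ : ∃ ν : Fin 3 → ℕ, ∀ i, ν i = addOrderOf (g i) / κ :=
    ⟨_, fun _ => rfl⟩
  have hn : ∀ i, addOrderOf (g i) = κ * ν i := by
    intro i; rw [hνdef i, Nat.mul_div_cancel' (hdvd i)]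
  have hνh : ∀ i, h i = ν i • g i := by
    intro i; rw [hνdef i]; exact hh i
  have hνpos : ∀ i, 0 < ν i := by
    intro i
    have h1 : 0 < addOrderOf (g i) := addOrderOf_pos (g i)
    rw [hn i] at h1
    rcases Nat.eq_zero_or_pos (ν i) with h2 | h2
    · rw [h2, mul_zero] at h1; omega
    · exact h2
  have hν10 : ν 1 ≤ ν 0 := by
    have := hord.1; rw [hn 0, hn 1] at this; exact Nat.le_of_mul_le_mul_left this hκpos
  have hν21 : ν 2 ≤ ν 1 := by
    have := hord.2; rw [hn 1, hn 2] at this; exact Nat.le_of_mul_le_mul_left this hκpos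
  have hν20 : ν 2 ≤ ν 0 := le_trans hν21 hν10
  have hκh : ∀ i, κ • h i = 0 := by
    intro i; rw [← hordh i]; exact addOrderOf_nsmul_eq_zero (h i)
  have hhne : ∀ i, h i ≠ 0 := by
    intro i hi
    have := hordh i
    rw [hi, addOrderOf_zero] at this
    omega
  have hmem2 : ∀ i, h i ∈ AddSubgroup.zmultiples (h 2) := by
    intro i; rw [← hsame i 2]; exact AddSubgroup.mem_zmultiples (h i)
  -- discrete logarithm solver
  have solve : ∀ (y : G), ∀ x ∈ AddSubgroup.zmultiples y, κ • y = 0 →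
      ∃ r : ℕ, r < κ ∧ r • y = x := by
    intro y x hx hy
    obtain ⟨z, hz⟩ := AddSubgroup.mem_zmultiples_iff.mp hx
    have hper : (z % (κ:ℤ)) • y = z • y := by
      rw [Int.emod_def, sub_zsmul, mul_comm (κ:ℤ) (z/(κ:ℤ)), mul_smul, natCast_zsmul, hy]
      simp
    have h0 : (0:ℤ) ≤ z % κ := Int.emod_nonneg z (by exact_mod_cast hκpos.ne')
    have h1 : z % (κ:ℤ) < κ := Int.emod_lt_of_pos z (by exact_mod_cast hκpos)
    refine ⟨(z % (κ:ℤ)).toNat, by omega, ?_⟩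
    rw [← natCast_zsmul, Int.toNat_of_nonneg h0, hper, hz]
  -- decompose m into quotient and remainder parts
  obtain ⟨α, hαdef⟩ : ∃ α : Fin 3 → ℕ, ∀ i, α i = m i / ν i := ⟨_, fun _ => rfl⟩
  obtain ⟨β, hβdef⟩ : ∃ β : Fin 3 → ℕ, ∀ i, β i = m i % ν i := ⟨_, fun _ => rfl⟩
  have hmαβ : ∀ i, m i = α i * ν i + β i := by
    intro i
    rw [hαdef i, hβdef i, mul_comm, Nat.div_add_mod]
  have hβlt : ∀ i, β i < ν i := by
    intro i; rw [hβdef i]; exact Nat.mod_lt _ (hνpos i)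
  have hb3 : m 0 • g 0 + m 1 • g 1 + m 2 • g 2 = 0 := by
    have hb' : ∑ i, m i • g i = 0 := hb
    rwa [Fin.sum_univ_three] at hb'
  have hsplit : ∀ i : Fin 3, m i • g i = α i • h i + β i • g i := by
    intro i
    rw [hνh i, smul_smul, ← add_smul, ← hmαβ i]
  have hβg : β 0 • g 0 + β 1 • g 1 + β 2 • g 2
      = -(α 0 • h 0 + α 1 • h 1 + α 2 • h 2) := by
    have e := hb3
    rw [hsplit 0, hsplit 1, hsplit 2] at e
    have e2 : (α 0 • h 0 + α 1 • h 1 + α 2 • h 2)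
        + (β 0 • g 0 + β 1 • g 1 + β 2 • g 2) = 0 := by rw [← e]; abel
    exact eq_neg_of_add_eq_zero_right e2
  -- the three basic short blocks
  obtain ⟨r2, hr2κ, hr2⟩ := solve (h 2) (-(h 0)) (neg_mem (hmem2 0)) (hκh 2)
  obtain ⟨r1, hr1κ, hr1⟩ := solve (h 2) (-(h 1)) (neg_mem (hmem2 1)) (hκh 2)
  have hlen3 : κ * ν 0 < m 0 + m 1 + m 2 := by
    rw [← hn 0]
    rwa [Fin.sum_univ_three] at hlen
  -- KEY: any block V with ∑V < ∑m that differs from a multiple of itself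
  -- by ν-multiples cannot exist (else m decomposes over short blocks)
  have KEY : ∀ (V : Fin 3 → ℕ) (d : ℤ) (s : Fin 3 → ℤ),
      IsBlock g V → (∀ i, (m i : ℤ) = d * V i + s i * ν i) →
      V 0 + V 1 + V 2 < m 0 + m 1 + m 2 → False := by
    intro V d s hVb hVs hVlen
    have hVb3 : V 0 • g 0 + V 1 • g 1 + V 2 • g 2 = 0 := by
      have := hVb
      rwa [IsBlock, Fin.sum_univ_three] at this
    -- s is a zero-sum combination of the h i
    have hs : s 0 • h 0 + s 1 • h 1 + s 2 • h 2 = 0 := by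
      have f : ∀ i : Fin 3, (m i : ℤ) • g i = d • ((V i) • g i) + s i • h i := by
        intro i
        rw [hνh i, ← natCast_zsmul (g i) (ν i), ← mul_smul, ← natCast_zsmul (g i) (V i),
          ← mul_smul, ← add_smul]
        congr 1
        rw [hVs i]
      have cast3 : (m 0 : ℤ) • g 0 + (m 1 : ℤ) • g 1 + (m 2 : ℤ) • g 2 = 0 := by
        simp only [natCast_zsmul]; exact hb3
      rw [f 0, f 1, f 2] at cast3
      have expand : d • ((V 0) • g 0) + s 0 • h 0 + (d • ((V 1) • g 1) + s 1 • h 1)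
          + (d • ((V 2) • g 2) + s 2 • h 2)
          = d • (V 0 • g 0 + V 1 • g 1 + V 2 • g 2)
            + (s 0 • h 0 + s 1 • h 1 + s 2 • h 2) := by
        rw [smul_add, smul_add]; abel
      rw [expand, hVb3, smul_zero, zero_add] at cast3
      exact cast3
    -- divisibility giving the coefficient of the third block
    have hdv : ((κ:ℕ):ℤ) ∣ (s 2 - s 0 * r2 - s 1 * r1) := by
      rw [show ((κ:ℕ):ℤ) = ((addOrderOf (h 2) : ℕ) : ℤ) by rw [hordh 2],
        addOrderOf_dvd_iff_zsmul_eq_zero, sub_zsmul, sub_zsmul, mul_smul, mul_smul,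
        natCast_zsmul, natCast_zsmul, hr2, hr1]
      rw [show s 2 • h 2 + -(s 0 • -h 0) + -(s 1 • -h 1)
          = s 0 • h 0 + s 1 • h 1 + s 2 • h 2 from by rw [smul_neg, smul_neg]; abel, hs]
    obtain ⟨lam3, hlam3⟩ := hdv
    apply hatom
    refine ⟨4, ![d, s 0, s 1, lam3],
      ![V, ![ν 0, 0, r2 * ν 2], ![0, ν 1, r1 * ν 2], ![0, 0, κ * ν 2]], ?_, ?_⟩
    · intro j
      have hsm : ∑ i, m i = m 0 + m 1 + m 2 := Fin.sum_univ_three m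
      fin_cases j
      · refine ⟨hVb, ?_⟩
        show ∑ i, V i < ∑ i, m i
        rw [Fin.sum_univ_three, hsm]
        exact hVlen
      · constructor
        · show IsBlock g ![ν 0, 0, r2 * ν 2]
          unfold IsBlock
          rw [Fin.sum_univ_three]
          show ν 0 • g 0 + (0:ℕ) • g 1 + (r2 * ν 2) • g 2 = 0
          rw [zero_smul, add_zero, ← hνh 0, mul_smul, ← hνh 2, hr2]
          simp
        · show ∑ i, (![ν 0, 0, r2 * ν 2] : Fin 3 → ℕ) i < ∑ i, m i
          rw [Fin.sum_univ_three, hsm]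
          show ν 0 + 0 + r2 * ν 2 < m 0 + m 1 + m 2
          have p1 : r2 * ν 2 ≤ r2 * ν 0 := Nat.mul_le_mul_left _ hν20
          have p2 : (r2 + 1) * ν 0 ≤ κ * ν 0 := Nat.mul_le_mul_right _ (by omega)
          linarith [hlen3]
      · constructor
        · show IsBlock g ![0, ν 1, r1 * ν 2]
          unfold IsBlock
          rw [Fin.sum_univ_three]
          show (0:ℕ) • g 0 + ν 1 • g 1 + (r1 * ν 2) • g 2 = 0
          rw [zero_smul, zero_add, ← hνh 1, mul_smul, ← hνh 2, hr1]
          simp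
        · show ∑ i, (![0, ν 1, r1 * ν 2] : Fin 3 → ℕ) i < ∑ i, m i
          rw [Fin.sum_univ_three, hsm]
          show 0 + ν 1 + r1 * ν 2 < m 0 + m 1 + m 2
          have p1 : r1 * ν 2 ≤ r1 * ν 0 := Nat.mul_le_mul_left _ hν20
          have p2 : (r1 + 1) * ν 0 ≤ κ * ν 0 := Nat.mul_le_mul_right _ (by omega)
          linarith [hlen3, hν10]
      · constructor
        · show IsBlock g ![0, 0, κ * ν 2]
          unfold IsBlock
          rw [Fin.sum_univ_three]
          show (0:ℕ) • g 0 + (0:ℕ) • g 1 + (κ * ν 2) • g 2 = 0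
          rw [zero_smul, zero_add, zero_smul, zero_add, mul_smul, ← hνh 2, hκh 2]
        · show ∑ i, (![0, 0, κ * ν 2] : Fin 3 → ℕ) i < ∑ i, m i
          rw [Fin.sum_univ_three, hsm]
          show 0 + 0 + κ * ν 2 < m 0 + m 1 + m 2
          have p1 : κ * ν 2 ≤ κ * ν 0 := Nat.mul_le_mul_left _ hν20
          linarith [hlen3]
    · intro i
      rw [Fin.sum_univ_four]
      fin_cases i
      · show (m 0 : ℤ) = d * (V 0 : ℤ) + s 0 * ((ν 0 : ℕ) : ℤ)
            + s 1 * ((0 : ℕ) : ℤ) + lam3 * ((0 : ℕ) : ℤ)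
        rw [hVs 0]
        push_cast
        ring
      · show (m 1 : ℤ) = d * (V 1 : ℤ) + s 0 * ((0 : ℕ) : ℤ)
            + s 1 * ((ν 1 : ℕ) : ℤ) + lam3 * ((0 : ℕ) : ℤ)
        rw [hVs 1]
        push_cast
        ring
      · show (m 2 : ℤ) = d * (V 2 : ℤ) + s 0 * ((r2 * ν 2 : ℕ) : ℤ)
            + s 1 * ((r1 * ν 2 : ℕ) : ℤ) + lam3 * ((κ * ν 2 : ℕ) : ℤ)
        rw [hVs 2]
        push_cast
        linear_combination (ν 2 : ℤ) * hlam3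
  -- the combination α 0 • h 0 + α 1 • h 1 + α 2 • h 2 lies in the common cyclic group
  have hHmem : α 0 • h 0 + α 1 • h 1 + α 2 • h 2 ∈ AddSubgroup.zmultiples (h 2) :=
    add_mem (add_mem (AddSubgroup.nsmul_mem _ (hmem2 0) _)
      (AddSubgroup.nsmul_mem _ (hmem2 1) _)) (AddSubgroup.nsmul_mem _ (hmem2 2) _)
  obtain ⟨t0, ht0κ, ht0⟩ := solve (h 2) _ hHmem (hκh 2)
  -- first instance : the fractional part block
  have I1 : m 0 + m 1 + m 2 ≤ β 0 + β 1 + (β 2 + t0 * ν 2) := by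
    by_contra hcon
    push_neg at hcon
    refine KEY ![β 0, β 1, β 2 + t0 * ν 2] 1 ![(α 0 : ℤ), (α 1 : ℤ), (α 2 : ℤ) - t0] ?_ ?_ ?_
    · unfold IsBlock
      rw [Fin.sum_univ_three]
      show β 0 • g 0 + β 1 • g 1 + (β 2 + t0 * ν 2) • g 2 = 0
      rw [add_smul, mul_smul, ← hνh 2, ht0]
      rw [show β 0 • g 0 + β 1 • g 1 + (β 2 • g 2 + (α 0 • h 0 + α 1 • h 1 + α 2 • h 2))
          = (β 0 • g 0 + β 1 • g 1 + β 2 • g 2)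
            + (α 0 • h 0 + α 1 • h 1 + α 2 • h 2) from by abel, hβg]
      abel
    · intro i
      fin_cases i
      · show (m 0 : ℤ) = 1 * ((β 0 : ℕ) : ℤ) + (α 0 : ℤ) * ((ν 0 : ℕ) : ℤ)
        rw [hmαβ 0]; push_cast; ring
      · show (m 1 : ℤ) = 1 * ((β 1 : ℕ) : ℤ) + (α 1 : ℤ) * ((ν 1 : ℕ) : ℤ)
        rw [hmαβ 1]; push_cast; ring
      · show (m 2 : ℤ) = 1 * ((β 2 + t0 * ν 2 : ℕ) : ℤ) + ((α 2 : ℤ) - t0) * ((ν 2 : ℕ) : ℤ)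
        rw [hmαβ 2]; push_cast; ring
    · show β 0 + β 1 + (β 2 + t0 * ν 2) < m 0 + m 1 + m 2
      exact hcon
  -- the congruence-fixing coefficient for the covering block
  obtain ⟨c, hcκ, hc⟩ := solve (h 2)
    (-(h 0 + h 1 + (α 0 • h 0 + α 1 • h 1 + α 2 • h 2)))
    (neg_mem (add_mem (add_mem (hmem2 0) (hmem2 1)) hHmem)) (hκh 2)
  obtain ⟨c', hc'1, hc'κ, hc', hc'if⟩ :
      ∃ c' : ℕ, 1 ≤ c' ∧ c' ≤ κ ∧
        c' • h 2 = -(h 0 + h 1 + (α 0 • h 0 + α 1 • h 1 + α 2 • h 2)) ∧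
        c' = (if c = 0 then κ else c) := by
    by_cases h0 : c = 0
    · refine ⟨κ, by omega, le_refl _, ?_, by simp [h0]⟩
      rw [hκh 2, ← hc, h0, zero_smul]
    · exact ⟨c, by omega, by omega, hc, by simp [h0]⟩
  have hβ2c' : β 2 ≤ c' * ν 2 :=
    le_trans (hβlt 2).le (Nat.le_mul_of_pos_left (ν 2) (by omega))
  -- second instance : the covering block
  have I2 : m 0 + m 1 + m 2 ≤ (ν 0 - β 0) + (ν 1 - β 1) + (c' * ν 2 - β 2) := by
    by_contra hcon
    push_neg at hcon
    refine KEY ![ν 0 - β 0, ν 1 - β 1, c' * ν 2 - β 2] (-1)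
      ![1 + (α 0 : ℤ), 1 + (α 1 : ℤ), (c' : ℤ) + (α 2 : ℤ)] ?_ ?_ ?_
    · unfold IsBlock
      rw [Fin.sum_univ_three]
      show (ν 0 - β 0) • g 0 + (ν 1 - β 1) • g 1 + (c' * ν 2 - β 2) • g 2 = 0
      have sub0 : (ν 0 - β 0) • g 0 = ν 0 • g 0 - β 0 • g 0 := by
        rw [eq_sub_iff_add_eq, ← add_smul, Nat.sub_add_cancel (hβlt 0).le]
      have sub1 : (ν 1 - β 1) • g 1 = ν 1 • g 1 - β 1 • g 1 := by
        rw [eq_sub_iff_add_eq, ← add_smul, Nat.sub_add_cancel (hβlt 1).le]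
      have sub2 : (c' * ν 2 - β 2) • g 2 = c' • h 2 - β 2 • g 2 := by
        rw [eq_sub_iff_add_eq, ← add_smul, Nat.sub_add_cancel hβ2c', hνh 2, smul_smul]
      rw [sub0, sub1, sub2, hc']
      rw [show ν 0 • g 0 - β 0 • g 0 + (ν 1 • g 1 - β 1 • g 1)
            + (-(h 0 + h 1 + (α 0 • h 0 + α 1 • h 1 + α 2 • h 2)) - β 2 • g 2)
          = (ν 0 • g 0 + ν 1 • g 1) - (β 0 • g 0 + β 1 • g 1 + β 2 • g 2)
            - (h 0 + h 1) - (α 0 • h 0 + α 1 • h 1 + α 2 • h 2) from by abel, hβg,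
        ← hνh 0, ← hνh 1]
      abel
    · intro i
      fin_cases i
      · show (m 0 : ℤ) = -1 * ((ν 0 - β 0 : ℕ) : ℤ) + (1 + (α 0 : ℤ)) * ((ν 0 : ℕ) : ℤ)
        rw [hmαβ 0, Nat.cast_sub (hβlt 0).le]; push_cast; ring
      · show (m 1 : ℤ) = -1 * ((ν 1 - β 1 : ℕ) : ℤ) + (1 + (α 1 : ℤ)) * ((ν 1 : ℕ) : ℤ)
        rw [hmαβ 1, Nat.cast_sub (hβlt 1).le]; push_cast; ring
      · show (m 2 : ℤ) = -1 * ((c' * ν 2 - β 2 : ℕ) : ℤ)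
            + ((c' : ℤ) + (α 2 : ℤ)) * ((ν 2 : ℕ) : ℤ)
        rw [hmαβ 2, Nat.cast_sub hβ2c']; push_cast; ring
    · show (ν 0 - β 0) + (ν 1 - β 1) + (c' * ν 2 - β 2) < m 0 + m 1 + m 2
      exact hcon
  -- arithmetic consequences
  have e0 : (ν 0 - β 0) + β 0 = ν 0 := Nat.sub_add_cancel (hβlt 0).le
  have e1 : (ν 1 - β 1) + β 1 = ν 1 := Nat.sub_add_cancel (hβlt 1).le
  have e2 : (c' * ν 2 - β 2) + β 2 = c' * ν 2 := Nat.sub_add_cancel hβ2c'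
  have hA : α 0 * ν 0 + α 1 * ν 1 + α 2 * ν 2 ≤ t0 * ν 2 := by
    linarith [I1, hmαβ 0, hmαβ 1, hmαβ 2]
  have hA2B : (α 0 * ν 0 + α 1 * ν 1 + α 2 * ν 2) + 2 * (β 0 + β 1 + β 2)
      ≤ ν 0 + ν 1 + c' * ν 2 := by
    linarith [I2, e0, e1, e2, hmαβ 0, hmαβ 1, hmαβ 2]
  -- κ cannot be 2
  have hκne : κ ≠ 2 := by
    intro h2κ
    subst h2κ
    obtain ⟨r, hrκ, hr⟩ := solve (h 0) (h 1)
      (by rw [← hsame 1 0]; exact AddSubgroup.mem_zmultiples _) (hκh 0)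
    have h10 : h 1 = h 0 := by
      have : r = 0 ∨ r = 1 := by omega
      rcases this with h' | h'
      · rw [h', zero_smul] at hr; exact absurd hr.symm (hhne 1)
      · rw [h', one_smul] at hr; exact hr.symm
    have h2h : h 0 + h 0 = 0 := by
      have := hκh 0
      rwa [show (2:ℕ) • h 0 = h 0 + h 0 from two_nsmul (h 0)] at this
    have ht0c : t0 = 0 ∨ t0 = 1 := by omega
    rcases ht0c with h' | h'
    · -- t0 = 0 : the quotient part vanishes
      subst h'
      have hHα : α 0 • h 0 + α 1 • h 1 + α 2 • h 2 = 0 := by rw [← ht0, zero_smul]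
      have hc0 : c = 0 := by
        by_contra hne
        have hc1 : c = 1 := by omega
        rw [hc1, one_smul] at hc
        rw [hHα, add_zero, h10, h2h, neg_zero] at hc
        exact hhne 2 hc
      rw [hc0] at hc'if
      simp at hc'if
      rw [hc'if] at hA2B
      simp at hA
      linarith [hlen3, hmαβ 0, hmαβ 1, hmαβ 2, hν10, hν20, hA, hA2B]
    · -- t0 = 1
      subst h'
      have hHα : α 0 • h 0 + α 1 • h 1 + α 2 • h 2 = h 2 := by rw [← ht0, one_smul]
      have hcne : c ≠ 0 := by
        intro hc0
        rw [hc0, zero_smul] at hc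
        rw [hHα, h10] at hc
        rw [show h 0 + h 0 + h 2 = (h 0 + h 0) + h 2 from rfl, h2h, zero_add] at hc
        exact hhne 2 (by rw [← neg_neg (h 2), ← hc, neg_zero])
      have hc1 : c = 1 := by omega
      rw [hc1] at hc'if
      simp at hc'if
      rw [hc'if] at hA2B
      rw [one_mul] at hA
      linarith [hlen3, hmαβ 0, hmαβ 1, hmαβ 2, hν10, hν20, hν21, hA, hA2B]
  refine ⟨hκne, ?_⟩
  -- the length inequality
  rw [Fin.sum_univ_three, ← hνdef 1, ← hνdef 2, hn 0, hn 1, hn 2]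
  obtain ⟨k, hκk⟩ : ∃ k, κ = k + 2 := ⟨κ - 2, by omega⟩
  rw [hκk] at hlen3 ht0κ hc'κ ⊢
  have pt : t0 * ν 2 ≤ (k + 1) * ν 2 := Nat.mul_le_mul_right _ (by omega)
  have pc : c' * ν 2 ≤ (k + 2) * ν 2 := Nat.mul_le_mul_right _ (by omega)
  have pk1 : k * ν 2 ≤ k * ν 1 := Nat.mul_le_mul_left _ hν21
  have pk0 : (k + 1) * ν 2 ≤ (k + 1) * ν 0 := Nat.mul_le_mul_left _ hν20
  have hsub : k + 2 - 2 = k := by omega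
  rw [hsub]
  linarith [hA, hA2B, hlen3, hmαβ 0, hmαβ 1, hmαβ 2, pt, pc, pk1, pk0]
end

section
/- Let G be a finite abelian group of odd order whose exponent is ℓn with ℓ > 1 and with n the second invariant factor (so G = C_{ℓn} ⊕ C_n ⊕ … with n ≥ 2 dividing ℓn). Let g1,g2,g3 ∈ G each of order ℓn, and let m = [m1,m2,m3] ∈ B(g1,g2,g3) with |m| > ℓn such that exactly one of m1, m2, m3 is even. Then m is not a group atom in B(g1,g2,g3). -/
open Finset

lemma par_plus (n m k r o t : ℤ) (hm : m = n * k + r) (hro : 2 ∣ r - o)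
    (hn : 2 ∣ n - 1) : 2 ∣ 1 * m + n * (o - k + 2 * t) := by
  have e : 1 * m + n * (o - k + 2 * t) = (r - o) + (n - 1) * o + 2 * (o + n * t) := by
    rw [hm]; ring
  rw [e]
  exact dvd_add (dvd_add hro (hn.mul_right o)) ⟨o + n * t, rfl⟩

lemma par_minus (n m k r d t : ℤ) (hm : m = n * k + r) (hrd : 2 ∣ d - r)
    (hn : 2 ∣ n - 1) : 2 ∣ (-1) * m + n * (k + d + 2 * t) := by
  have e : (-1) * m + n * (k + d + 2 * t) = (d - r) + (n - 1) * d + 2 * (n * t) := by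
    rw [hm]; ring
  rw [e]
  exact dvd_add (dvd_add hrd (hn.mul_right d)) ⟨n * t, rfl⟩

lemma cong_helper (L hh S a b r t : ℤ) (h2 : 2 * hh = L + 1)
    (hab : a * b ≡ 1 [ZMOD L]) (hr : r ≡ -(hh * S) [ZMOD L]) (ht : t ≡ r * b [ZMOD L]) :
    S + 2 * (a * t) ≡ 0 [ZMOD L] := by
  have h1 : S + 2 * (a * t) ≡ S + 2 * (a * (r * b)) [ZMOD L] :=
    ((ht.mul_left a).mul_left 2).add_left S
  have h3 : S + 2 * (a * (r * b)) ≡ S + 2 * (a * (-(hh * S) * b)) [ZMOD L] :=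
    (((hr.mul_right b).mul_left a).mul_left 2).add_left S
  have e4 : S + 2 * (a * (-(hh * S) * b)) = S - (2 * hh) * (S * (a * b)) := by ring
  have h5 : S - (2 * hh) * (S * (a * b)) ≡ S - (2 * hh) * (S * 1) [ZMOD L] :=
    ((hab.mul_left S).mul_left (2 * hh)).sub_left S
  have h6 : S - (2 * hh) * (S * 1) ≡ 0 [ZMOD L] := by
    rw [h2]
    have e : (0 : ℤ) - (S - (L + 1) * (S * 1)) = L * S := by ring
    exact Int.modEq_iff_dvd.mpr (by rw [e]; exact ⟨S, rfl⟩)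
  exact ((h1.trans h3).trans (e4 ▸ h5)).trans h6

/-- From a failing `t = L-1` strategy, the coefficient is `≡ -r`. -/
lemma neg_helper (L r a b t : ℤ) (hab : a * b ≡ 1 [ZMOD L]) (ht : t ≡ r * b [ZMOD L])
    (hteq : t = L - 1) : a ≡ -r [ZMOD L] := by
  have h1 : r * b ≡ L - 1 [ZMOD L] := (hteq ▸ ht).symm
  have h2 : r * (a * b) ≡ r [ZMOD L] := by simpa using hab.mul_left r
  have h3 : a * (r * b) ≡ a * (L - 1) [ZMOD L] := h1.mul_left a
  have h4 : a * (L - 1) ≡ -a [ZMOD L] := Int.modEq_iff_dvd.mpr ⟨-a, by ring⟩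
  have e : r * (a * b) = a * (r * b) := by ring
  have h5 : r ≡ -a [ZMOD L] := (h2.symm.trans (e ▸ h3)).trans h4
  simpa using h5.symm.neg

lemma lemC (L n m0 m1 m2 a0 a1 a2 b0 b1 b2 : ℤ)
    (hL : 3 ≤ L) (hn : 3 ≤ n) (hLodd : L % 2 = 1) (hnodd : n % 2 = 1)
    (hm0 : 0 ≤ m0) (hm1 : 0 ≤ m1) (hm2 : 0 ≤ m2)
    (hlen : L * n < m0 + m1 + m2)
    (hab0 : a0 * b0 ≡ 1 [ZMOD L]) (hab1 : a1 * b1 ≡ 1 [ZMOD L])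
    (hab2 : a2 * b2 ≡ 1 [ZMOD L]) :
    ∃ σ c0 c1 c2 : ℤ, (σ = 1 ∨ σ = -1) ∧
      (2 ∣ σ * m0 + n * c0) ∧ (2 ∣ σ * m1 + n * c1) ∧ (2 ∣ σ * m2 + n * c2) ∧
      (0 ≤ σ * m0 + n * c0) ∧ (0 ≤ σ * m1 + n * c1) ∧ (0 ≤ σ * m2 + n * c2) ∧
      ((a0 * c0 + a1 * c1 + a2 * c2) ≡ 0 [ZMOD L]) ∧
      n * (c0 + c1 + c2) < (2 - σ) * (m0 + m1 + m2) := by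
  have hn0 : (0:ℤ) < n := by omega
  have hL0 : (0:ℤ) < L := by omega
  have hn2 : (2:ℤ) ∣ n - 1 := by omega
  set k0 := m0 / n with hk0
  set k1 := m1 / n with hk1
  set k2 := m2 / n with hk2
  set r0 := m0 % n with hr0
  set r1 := m1 % n with hr1
  set r2 := m2 % n with hr2
  have hm0' : m0 = n * k0 + r0 := by rw [hk0, hr0]; exact (Int.mul_ediv_add_emod m0 n).symm
  have hm1' : m1 = n * k1 + r1 := by rw [hk1, hr1]; exact (Int.mul_ediv_add_emod m1 n).symm
  have hm2' : m2 = n * k2 + r2 := by rw [hk2, hr2]; exact (Int.mul_ediv_add_emod m2 n).symm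
  have hr0b : 0 ≤ r0 ∧ r0 < n := ⟨Int.emod_nonneg m0 (by omega), Int.emod_lt_of_pos m0 hn0⟩
  have hr1b : 0 ≤ r1 ∧ r1 < n := ⟨Int.emod_nonneg m1 (by omega), Int.emod_lt_of_pos m1 hn0⟩
  have hr2b : 0 ≤ r2 ∧ r2 < n := ⟨Int.emod_nonneg m2 (by omega), Int.emod_lt_of_pos m2 hn0⟩
  clear_value k0 k1 k2 r0 r1 r2
  obtain ⟨o0, ho0⟩ : ∃ o, (0 ≤ o ∧ o ≤ 1) ∧ 2 ∣ r0 - o := ⟨r0 % 2, by omega, by omega⟩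
  obtain ⟨o1, ho1⟩ : ∃ o, (0 ≤ o ∧ o ≤ 1) ∧ 2 ∣ r1 - o := ⟨r1 % 2, by omega, by omega⟩
  obtain ⟨o2, ho2⟩ : ∃ o, (0 ≤ o ∧ o ≤ 1) ∧ 2 ∣ r2 - o := ⟨r2 % 2, by omega, by omega⟩
  have hdelta : ∀ r o : ℤ, 0 ≤ r → r < n → (0 ≤ o ∧ o ≤ 1) → 2 ∣ r - o →
      ∃ d, (2 ∣ d - r) ∧ (0 ≤ d ∧ o + d ≤ 2) ∧ r ≤ n * d := by
    intro r o hr hrn ho hro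
    by_cases h : r = 0
    · exact ⟨0, by omega, by omega, by simp [h]⟩
    · refine ⟨2 - o, by omega, by omega, ?_⟩
      rcases (by omega : o = 0 ∨ o = 1) with h1 | h1 <;> subst h1 <;> [skip; simp] <;> omega
  obtain ⟨d0, hd0⟩ := hdelta r0 o0 hr0b.1 hr0b.2 ho0.1 ho0.2
  obtain ⟨d1, hd1⟩ := hdelta r1 o1 hr1b.1 hr1b.2 ho1.1 ho1.2
  obtain ⟨d2, hd2⟩ := hdelta r2 o2 hr2b.1 hr2b.2 ho2.1 ho2.2
  obtain ⟨hh, hhh⟩ : ∃ hh, 2 * hh = L + 1 := ⟨(L + 1) / 2, Int.mul_ediv_cancel' (by omega)⟩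
  -- the σ = +1 data
  set rp := (-(hh * (a0 * (o0 - k0) + a1 * (o1 - k1) + a2 * (o2 - k2)))) % L with hrpdef
  have hrpb : 0 ≤ rp ∧ rp < L := ⟨Int.emod_nonneg _ (by omega), Int.emod_lt_of_pos _ hL0⟩
  have hrp : rp ≡ -(hh * (a0 * (o0 - k0) + a1 * (o1 - k1) + a2 * (o2 - k2))) [ZMOD L] :=
    Int.emod_emod_of_dvd _ dvd_rfl
  set t0 := (rp * b0) % L with ht0def
  set t1 := (rp * b1) % L with ht1def
  set t2 := (rp * b2) % L with ht2def
  have ht0 : t0 ≡ rp * b0 [ZMOD L] := Int.emod_emod_of_dvd _ dvd_rfl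
  have ht1 : t1 ≡ rp * b1 [ZMOD L] := Int.emod_emod_of_dvd _ dvd_rfl
  have ht2 : t2 ≡ rp * b2 [ZMOD L] := Int.emod_emod_of_dvd _ dvd_rfl
  have ht0b : 0 ≤ t0 ∧ t0 ≤ L - 1 :=
    ⟨Int.emod_nonneg _ (by omega), by have := Int.emod_lt_of_pos (rp * b0) hL0; omega⟩
  have ht1b : 0 ≤ t1 ∧ t1 ≤ L - 1 :=
    ⟨Int.emod_nonneg _ (by omega), by have := Int.emod_lt_of_pos (rp * b1) hL0; omega⟩
  have ht2b : 0 ≤ t2 ∧ t2 ≤ L - 1 :=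
    ⟨Int.emod_nonneg _ (by omega), by have := Int.emod_lt_of_pos (rp * b2) hL0; omega⟩
  -- the σ = -1 data
  set rm := (-(hh * (a0 * (k0 + d0) + a1 * (k1 + d1) + a2 * (k2 + d2)))) % L with hrmdef
  have hrm : rm ≡ -(hh * (a0 * (k0 + d0) + a1 * (k1 + d1) + a2 * (k2 + d2))) [ZMOD L] :=
    Int.emod_emod_of_dvd _ dvd_rfl
  set t3 := (rm * b0) % L with ht3def
  have ht3 : t3 ≡ rm * b0 [ZMOD L] := Int.emod_emod_of_dvd _ dvd_rfl
  have ht3b : 0 ≤ t3 ∧ t3 ≤ L - 1 :=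
    ⟨Int.emod_nonneg _ (by omega), by have := Int.emod_lt_of_pos (rm * b0) hL0; omega⟩
  clear_value rp rm
  clear_value t0 t1 t2 t3
  -- the four strategies
  by_cases H0 : n * ((o0 - k0 + 2 * t0) + (o1 - k1 + 2 * 0) + (o2 - k2 + 2 * 0))
      < (2 - 1) * (m0 + m1 + m2)
  · refine ⟨1, o0 - k0 + 2 * t0, o1 - k1 + 2 * 0, o2 - k2 + 2 * 0, Or.inl rfl,
      par_plus n m0 k0 r0 o0 t0 hm0' ho0.2 hn2,
      par_plus n m1 k1 r1 o1 0 hm1' ho1.2 hn2,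
      par_plus n m2 k2 r2 o2 0 hm2' ho2.2 hn2, ?_, ?_, ?_, ?_, H0⟩
    · have e : 1 * m0 + n * (o0 - k0 + 2 * t0) = r0 + n * o0 + 2 * (n * t0) := by
        rw [hm0']; ring
      rw [e]
      have h1 : 0 ≤ n * o0 := mul_nonneg hn0.le ho0.1.1
      have h2 : 0 ≤ n * t0 := mul_nonneg hn0.le ht0b.1
      linarith [hr0b.1]
    · have e : 1 * m1 + n * (o1 - k1 + 2 * 0) = r1 + n * o1 := by rw [hm1']; ring
      rw [e]
      have h1 : 0 ≤ n * o1 := mul_nonneg hn0.le ho1.1.1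
      linarith [hr1b.1]
    · have e : 1 * m2 + n * (o2 - k2 + 2 * 0) = r2 + n * o2 := by rw [hm2']; ring
      rw [e]
      have h1 : 0 ≤ n * o2 := mul_nonneg hn0.le ho2.1.1
      linarith [hr2b.1]
    · have e : a0 * (o0 - k0 + 2 * t0) + a1 * (o1 - k1 + 2 * 0) + a2 * (o2 - k2 + 2 * 0)
          = (a0 * (o0 - k0) + a1 * (o1 - k1) + a2 * (o2 - k2)) + 2 * (a0 * t0) := by ring
      rw [e]
      exact cong_helper L hh _ a0 b0 rp t0 hhh hab0 hrp ht0
  by_cases H1 : n * ((o0 - k0 + 2 * 0) + (o1 - k1 + 2 * t1) + (o2 - k2 + 2 * 0))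
      < (2 - 1) * (m0 + m1 + m2)
  · refine ⟨1, o0 - k0 + 2 * 0, o1 - k1 + 2 * t1, o2 - k2 + 2 * 0, Or.inl rfl,
      par_plus n m0 k0 r0 o0 0 hm0' ho0.2 hn2,
      par_plus n m1 k1 r1 o1 t1 hm1' ho1.2 hn2,
      par_plus n m2 k2 r2 o2 0 hm2' ho2.2 hn2, ?_, ?_, ?_, ?_, H1⟩
    · have e : 1 * m0 + n * (o0 - k0 + 2 * 0) = r0 + n * o0 := by rw [hm0']; ring
      rw [e]
      have h1 : 0 ≤ n * o0 := mul_nonneg hn0.le ho0.1.1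
      linarith [hr0b.1]
    · have e : 1 * m1 + n * (o1 - k1 + 2 * t1) = r1 + n * o1 + 2 * (n * t1) := by
        rw [hm1']; ring
      rw [e]
      have h1 : 0 ≤ n * o1 := mul_nonneg hn0.le ho1.1.1
      have h2 : 0 ≤ n * t1 := mul_nonneg hn0.le ht1b.1
      linarith [hr1b.1]
    · have e : 1 * m2 + n * (o2 - k2 + 2 * 0) = r2 + n * o2 := by rw [hm2']; ring
      rw [e]
      have h1 : 0 ≤ n * o2 := mul_nonneg hn0.le ho2.1.1
      linarith [hr2b.1]
    · have e : a0 * (o0 - k0 + 2 * 0) + a1 * (o1 - k1 + 2 * t1) + a2 * (o2 - k2 + 2 * 0)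
          = (a0 * (o0 - k0) + a1 * (o1 - k1) + a2 * (o2 - k2)) + 2 * (a1 * t1) := by ring
      rw [e]
      exact cong_helper L hh _ a1 b1 rp t1 hhh hab1 hrp ht1
  by_cases H2 : n * ((o0 - k0 + 2 * 0) + (o1 - k1 + 2 * 0) + (o2 - k2 + 2 * t2))
      < (2 - 1) * (m0 + m1 + m2)
  · refine ⟨1, o0 - k0 + 2 * 0, o1 - k1 + 2 * 0, o2 - k2 + 2 * t2, Or.inl rfl,
      par_plus n m0 k0 r0 o0 0 hm0' ho0.2 hn2,
      par_plus n m1 k1 r1 o1 0 hm1' ho1.2 hn2,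
      par_plus n m2 k2 r2 o2 t2 hm2' ho2.2 hn2, ?_, ?_, ?_, ?_, H2⟩
    · have e : 1 * m0 + n * (o0 - k0 + 2 * 0) = r0 + n * o0 := by rw [hm0']; ring
      rw [e]
      have h1 : 0 ≤ n * o0 := mul_nonneg hn0.le ho0.1.1
      linarith [hr0b.1]
    · have e : 1 * m1 + n * (o1 - k1 + 2 * 0) = r1 + n * o1 := by rw [hm1']; ring
      rw [e]
      have h1 : 0 ≤ n * o1 := mul_nonneg hn0.le ho1.1.1
      linarith [hr1b.1]
    · have e : 1 * m2 + n * (o2 - k2 + 2 * t2) = r2 + n * o2 + 2 * (n * t2) := by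
        rw [hm2']; ring
      rw [e]
      have h1 : 0 ≤ n * o2 := mul_nonneg hn0.le ho2.1.1
      have h2 : 0 ≤ n * t2 := mul_nonneg hn0.le ht2b.1
      linarith [hr2b.1]
    · have e : a0 * (o0 - k0 + 2 * 0) + a1 * (o1 - k1 + 2 * 0) + a2 * (o2 - k2 + 2 * t2)
          = (a0 * (o0 - k0) + a1 * (o1 - k1) + a2 * (o2 - k2)) + 2 * (a2 * t2) := by ring
      rw [e]
      exact cong_helper L hh _ a2 b2 rp t2 hhh hab2 hrp ht2
  by_cases H3 : n * ((k0 + d0 + 2 * t3) + (k1 + d1 + 2 * 0) + (k2 + d2 + 2 * 0))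
      < (2 - (-1)) * (m0 + m1 + m2)
  · refine ⟨-1, k0 + d0 + 2 * t3, k1 + d1 + 2 * 0, k2 + d2 + 2 * 0, Or.inr rfl,
      par_minus n m0 k0 r0 d0 t3 hm0' hd0.1 hn2,
      par_minus n m1 k1 r1 d1 0 hm1' hd1.1 hn2,
      par_minus n m2 k2 r2 d2 0 hm2' hd2.1 hn2, ?_, ?_, ?_, ?_, H3⟩
    · have e : (-1) * m0 + n * (k0 + d0 + 2 * t3) = (n * d0 - r0) + 2 * (n * t3) := by
        rw [hm0']; ring
      rw [e]
      have h2 : 0 ≤ n * t3 := mul_nonneg hn0.le ht3b.1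
      linarith [hd0.2.2]
    · have e : (-1) * m1 + n * (k1 + d1 + 2 * 0) = n * d1 - r1 := by rw [hm1']; ring
      rw [e]; linarith [hd1.2.2]
    · have e : (-1) * m2 + n * (k2 + d2 + 2 * 0) = n * d2 - r2 := by rw [hm2']; ring
      rw [e]; linarith [hd2.2.2]
    · have e : a0 * (k0 + d0 + 2 * t3) + a1 * (k1 + d1 + 2 * 0) + a2 * (k2 + d2 + 2 * 0)
          = (a0 * (k0 + d0) + a1 * (k1 + d1) + a2 * (k2 + d2)) + 2 * (a0 * t3) := by ring
      rw [e]
      exact cong_helper L hh _ a0 b0 rm t3 hhh hab0 hrm ht3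
  -- all four strategies failed: derive a contradiction
  exfalso
  push_neg at H0 H1 H2 H3
  norm_num at H0 H1 H2 H3
  have hdiv : ∀ X Y : ℤ, n * X < n * Y → X < Y := fun X Y h => lt_of_mul_lt_mul_left h hn0.le
  have hsum : m0 + m1 + m2 = n * (k0 + k1 + k2) + (r0 + r1 + r2) := by
    rw [hm0', hm1', hm2']; ring
  have hRest : n * (L - (k0 + k1 + k2)) < r0 + r1 + r2 := by
    have e : n * (L - (k0 + k1 + k2)) = L * n - n * (k0 + k1 + k2) := by ring
    rw [e]; linarith [hlen, hsum]
  -- (I)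
  have h10 : L < (o0 + o1 + o2) + 2 * t0 - (k0 + k1 + k2) := by
    apply hdiv
    linarith [hlen, H0]
  have h11 : L < (o0 + o1 + o2) + 2 * t1 - (k0 + k1 + k2) := by
    apply hdiv
    linarith [hlen, H1]
  have h12 : L < (o0 + o1 + o2) + 2 * t2 - (k0 + k1 + k2) := by
    apply hdiv
    linarith [hlen, H2]
  have hI : k0 + k1 + k2 ≤ L + (o0 + o1 + o2) - 3 := by omega
  -- (II)
  have h13 : 3 * L < (k0 + k1 + k2) + (d0 + d1 + d2) + 2 * t3 := by
    apply hdiv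
    linarith [H3, hsum, hRest]
  have hII : L + 3 - (d0 + d1 + d2) ≤ k0 + k1 + k2 := by omega
  -- each o_i + d_i = 2
  have hod0 : o0 + d0 = 2 := by omega
  have hod1 : o1 + d1 = 2 := by omega
  have hod2 : o2 + d2 = 2 := by omega
  -- all t's are L - 1
  have hT0 : t0 = L - 1 := by omega
  have hT1 : t1 = L - 1 := by omega
  have hT2 : t2 = L - 1 := by omega
  have hT3 : t3 = L - 1 := by omega
  -- modular endgame
  have hA0 : a0 ≡ -rp [ZMOD L] := neg_helper L rp a0 b0 t0 hab0 ht0 hT0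
  have hA1 : a1 ≡ -rp [ZMOD L] := neg_helper L rp a1 b1 t1 hab1 ht1 hT1
  have hA2 : a2 ≡ -rp [ZMOD L] := neg_helper L rp a2 b2 t2 hab2 ht2 hT2
  have hA0m : a0 ≡ -rm [ZMOD L] := neg_helper L rm a0 b0 t3 hab0 ht3 hT3
  -- rm ≡ rp
  have hrmrp : rm ≡ rp [ZMOD L] := by
    have h1 : -rm ≡ -rp [ZMOD L] := hA0m.symm.trans hA0
    simpa using h1.neg
  -- rp + rm ≡ -(a0+a1+a2) ≡ 3 rp
  have hSsum : (a0 * (o0 - k0) + a1 * (o1 - k1) + a2 * (o2 - k2))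
      + (a0 * (k0 + d0) + a1 * (k1 + d1) + a2 * (k2 + d2)) = 2 * (a0 + a1 + a2) := by
    linear_combination a0 * hod0 + a1 * hod1 + a2 * hod2
  have hsum2 : rp + rm ≡ -(hh * (2 * (a0 + a1 + a2))) [ZMOD L] := by
    have h1 := hrp.add hrm
    have e : -(hh * (a0 * (o0 - k0) + a1 * (o1 - k1) + a2 * (o2 - k2)))
        + -(hh * (a0 * (k0 + d0) + a1 * (k1 + d1) + a2 * (k2 + d2)))
        = -(hh * ((a0 * (o0 - k0) + a1 * (o1 - k1) + a2 * (o2 - k2))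
          + (a0 * (k0 + d0) + a1 * (k1 + d1) + a2 * (k2 + d2)))) := by ring
    rw [e, hSsum] at h1
    exact h1
  have hsum3 : rp + rm ≡ -(a0 + a1 + a2) [ZMOD L] := by
    have e : -(hh * (2 * (a0 + a1 + a2))) = -((2 * hh) * (a0 + a1 + a2)) := by ring
    rw [e, hhh] at hsum2
    have h2 : -((L + 1) * (a0 + a1 + a2)) ≡ -(a0 + a1 + a2) [ZMOD L] :=
      Int.modEq_iff_dvd.mpr ⟨a0 + a1 + a2, by ring⟩
    exact hsum2.trans h2
  have hsum4 : rp + rm ≡ 3 * rp [ZMOD L] := by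
    have h1 : -(a0 + a1 + a2) ≡ -(-rp + -rp + -rp) [ZMOD L] := ((hA0.add hA1).add hA2).neg
    have e : -(-rp + -rp + -rp) = 3 * rp := by ring
    exact hsum3.trans (e ▸ h1)
  have hrp0 : rp = 0 := by
    have h1 : rp + rm ≡ rp + rp [ZMOD L] := (hrmrp.add_left rp)
    have h2 : rp + rp ≡ 3 * rp [ZMOD L] := h1.symm.trans hsum4
    have h3 : L ∣ rp := by
      have := h2.dvd
      have e : 3 * rp - (rp + rp) = rp := by ring
      rwa [e] at this
    have h4 : rp % L = 0 := Int.emod_eq_zero_of_dvd h3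
    have h5 : rp % L = rp := Int.emod_eq_of_lt hrpb.1 hrpb.2
    omega
  have hfinal : (1 : ℤ) ≡ 0 [ZMOD L] := by
    have h1 : a0 ≡ 0 [ZMOD L] := by simpa [hrp0] using hA0
    have h2 : a0 * b0 ≡ 0 * b0 [ZMOD L] := h1.mul_right b0
    have h3 : (1 : ℤ) ≡ 0 * b0 [ZMOD L] := hab0.symm.trans h2
    simpa using h3
  have : L ∣ 1 := by
    have := hfinal.dvd
    simpa using this.neg_right
  have := Int.le_of_dvd one_pos this
  omega

theorem stmt_11 {H : Type*} [AddCommGroup H] [Fintype H]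
    (ℓ n : ℕ) (hℓ : 1 < ℓ) (hn : 2 ≤ n)
    (hexp : AddMonoid.exponent H = n)
    (hodd : Odd (ℓ * n * Fintype.card H))
    (g : Fin 3 → ZMod (ℓ * n) × H)
    (hord : ∀ i, addOrderOf (g i) = ℓ * n)
    (m : Fin 3 → ℕ) (hm : IsBlock g m) (hlen : ℓ * n < ∑ i, m i)
    (hpar : (Even (m 0) ∧ ¬Even (m 1) ∧ ¬Even (m 2)) ∨
            (¬Even (m 0) ∧ Even (m 1) ∧ ¬Even (m 2)) ∨
            (¬Even (m 0) ∧ ¬Even (m 1) ∧ Even (m 2))) :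
    ¬ IsGroupAtom g m := by
  rintro ⟨-, hatom⟩
  apply hatom; clear hatom
  obtain ⟨hoddln, hoddH⟩ := (Nat.odd_mul).mp hodd
  obtain ⟨hoddl, hoddn⟩ := (Nat.odd_mul).mp hoddln
  have hl3 : 3 ≤ ℓ := by rcases hoddl with ⟨k, hk⟩; omega
  have hn3 : 3 ≤ n := by rcases hoddn with ⟨k, hk⟩; omega
  haveI : NeZero (ℓ * n) := ⟨Nat.mul_ne_zero (by omega) (by omega)⟩
  have hH : ∀ h : H, n • h = 0 := fun h => hexp ▸ AddMonoid.exponent_nsmul_eq_zero h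
  have hNg : ∀ i, (ℓ * n) • g i = 0 := by
    intro i
    have := addOrderOf_nsmul_eq_zero (g i)
    rwa [hord i] at this
  have hcard : Odd (Fintype.card (ZMod (ℓ * n) × H)) := by
    rw [Fintype.card_prod, ZMod.card]
    exact hoddln.mul hoddH
  have hhalf : ∀ x : ZMod (ℓ * n) × H, 2 • x = 0 → x = 0 := by
    intro x hx
    have h1 : addOrderOf x ∣ 2 := addOrderOf_dvd_of_nsmul_eq_zero hx
    have h2 : addOrderOf x ∣ Fintype.card (ZMod (ℓ * n) × H) := addOrderOf_dvd_card
    rw [← AddMonoid.addOrderOf_eq_one_iff]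
    rcases (Nat.dvd_prime Nat.prime_two).mp h1 with h | h
    · exact h
    · exfalso; rw [h] at h2; rw [Nat.odd_iff] at hcard; omega
  have hng : ∀ i, n • g i = (((n * (g i).1.val : ℕ) : ZMod (ℓ * n)), (0 : H)) := by
    intro i
    have h2 : (n • g i).2 = (0 : H) := hH (g i).2
    have h1 : (n • g i).1 = ((n * (g i).1.val : ℕ) : ZMod (ℓ * n)) := by
      push_cast
      rw [ZMod.natCast_rightInverse (g i).1]
      simp [nsmul_eq_mul]
    exact Prod.ext h1 h2
  have hcop : ∀ i, Nat.Coprime ((g i).1.val) ℓ := by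
    intro i
    by_contra hc
    obtain ⟨p, hp, hpA, hpl⟩ := Nat.Prime.not_coprime_iff_dvd.mp hc
    have hM : ((ℓ / p) * n) • g i = 0 := by
      have h1 : ((ℓ / p) * n) • g i = (ℓ / p) • (n • g i) := mul_smul _ _ _
      rw [h1, hng i]
      have h2 : (ℓ / p) • (((n * (g i).1.val : ℕ) : ZMod (ℓ * n)), (0 : H))
          = ((((ℓ / p) * (n * (g i).1.val) : ℕ) : ZMod (ℓ * n)), (0 : H)) := by
        rw [Prod.smul_mk]
        simp [nsmul_eq_mul]
      rw [h2]
      have h3 : (((ℓ / p) * (n * (g i).1.val) : ℕ) : ZMod (ℓ * n)) = 0 := by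
        rw [ZMod.natCast_eq_zero_iff]
        obtain ⟨a, ha⟩ := hpA
        obtain ⟨b, hb⟩ := hpl
        have hbp : ℓ / p = b := by rw [hb]; exact Nat.mul_div_cancel_left b hp.pos
        rw [hbp, ha, hb]
        exact ⟨a, by ring⟩
      rw [h3]
      rfl
    have h4 : addOrderOf (g i) ∣ (ℓ / p) * n := addOrderOf_dvd_of_nsmul_eq_zero hM
    rw [hord i] at h4
    have h5 : (ℓ / p) * n ≠ 0 := by
      have : 1 ≤ ℓ / p := (Nat.one_le_div_iff hp.pos).mpr (Nat.le_of_dvd (by omega) hpl)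
      positivity
    have h6 : ℓ * n ≤ (ℓ / p) * n := Nat.le_of_dvd (by omega) h4
    have h7 : ℓ / p < ℓ := Nat.div_lt_self (by omega) hp.one_lt
    have h8 : (ℓ / p) * n < ℓ * n :=
      Nat.mul_lt_mul_of_lt_of_le h7 (le_refl n) (by omega)
    omega
  -- abbreviations for the first coordinates
  set A0 : ℕ := ((g 0).1).val with hA0
  set A1 : ℕ := ((g 1).1).val with hA1
  set A2 : ℕ := ((g 2).1).val with hA2
  -- inverses mod ℓ
  have hinv : ∀ i : Fin 3, ∃ b : ℤ, (((g i).1.val : ℤ)) * b ≡ 1 [ZMOD (ℓ : ℤ)] := by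
    intro i
    have h1 : IsCoprime (((g i).1.val : ℕ) : ℤ) ((ℓ : ℕ) : ℤ) :=
      Nat.isCoprime_iff_coprime.mpr (hcop i)
    obtain ⟨u, v, huv⟩ := h1
    refine ⟨u, Int.modEq_iff_dvd.mpr ⟨v, ?_⟩⟩
    linear_combination -huv
  obtain ⟨B0, hB0⟩ := hinv 0
  obtain ⟨B1, hB1⟩ := hinv 1
  obtain ⟨B2, hB2⟩ := hinv 2
  rw [← hA0] at hB0
  rw [← hA1] at hB1
  rw [← hA2] at hB2
  -- key combination machinery
  have hkey : ∀ c0 c1 c2 : ℤ, ((ℓ : ℤ) ∣ (A0 : ℤ) * c0 + (A1 : ℤ) * c1 + (A2 : ℤ) * c2) →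
      c0 • (n • g 0) + c1 • (n • g 1) + c2 • (n • g 2) = 0 := by
    rintro c0 c1 c2 ⟨e, he⟩
    rw [hng 0, hng 1, hng 2, ← hA0, ← hA1, ← hA2]
    have hz : ∀ (c : ℤ) (x : ZMod (ℓ * n)), c • (x, (0 : H)) = (c • x, (0 : H)) := by
      intro c x
      rw [Prod.smul_mk]
      simp [Matrix.vecHead, Matrix.vecTail]
    rw [hz, hz, hz]
    have hfst : c0 • ((n * A0 : ℕ) : ZMod (ℓ * n)) + c1 • ((n * A1 : ℕ) : ZMod (ℓ * n))
        + c2 • ((n * A2 : ℕ) : ZMod (ℓ * n)) = 0 := by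
      simp only [zsmul_eq_mul]
      have e1 : (c0 : ZMod (ℓ * n)) * ((n * A0 : ℕ) : ZMod (ℓ * n))
          + (c1 : ZMod (ℓ * n)) * ((n * A1 : ℕ) : ZMod (ℓ * n))
          + (c2 : ZMod (ℓ * n)) * ((n * A2 : ℕ) : ZMod (ℓ * n))
          = (((n : ℤ) * ((A0 : ℤ) * c0 + (A1 : ℤ) * c1 + (A2 : ℤ) * c2) : ℤ) : ZMod (ℓ * n)) := by
        push_cast
        ring
      rw [e1, he, ZMod.intCast_zmod_eq_zero_iff_dvd]
      push_cast
      exact ⟨e, by ring⟩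
    have : (c0 • ((n * A0 : ℕ) : ZMod (ℓ * n)) + c1 • ((n * A1 : ℕ) : ZMod (ℓ * n))
        + c2 • ((n * A2 : ℕ) : ZMod (ℓ * n)), (0 : H) + (0 : H) + (0 : H)) = ((0 : ZMod (ℓ * n)), (0 : H)) := by
      rw [hfst]; simp
    rw [Prod.mk_add_mk, Prod.mk_add_mk, this]
    rfl
  -- obtain the strategy from lemC
  have hlenZ : (ℓ : ℤ) * n < (m 0 : ℤ) + m 1 + m 2 := by
    rw [Fin.sum_univ_three] at hlen
    exact_mod_cast hlen
  obtain ⟨σ, c0, c1, c2, hσ, hp0, hp1, hp2, hnn0, hnn1, hnn2, hcong, hlength⟩ :=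
    lemC (ℓ : ℤ) (n : ℤ) (m 0) (m 1) (m 2) (A0 : ℤ) (A1 : ℤ) (A2 : ℤ) B0 B1 B2
      (by exact_mod_cast hl3) (by exact_mod_cast hn3)
      (by have := Nat.odd_iff.mp hoddl; omega)
      (by have := Nat.odd_iff.mp hoddn; omega)
      (by positivity) (by positivity) (by positivity)
      hlenZ hB0 hB1 hB2
  have hσ2 : σ * σ = 1 := by rcases hσ with h | h <;> subst h <;> norm_num
  -- the halved block y
  have hy : ∀ (mi ci : ℤ), 2 ∣ σ * mi + n * ci → 0 ≤ σ * mi + n * ci →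
      ∃ y : ℕ, 2 * (y : ℤ) = σ * mi + n * ci := by
    rintro mi ci ⟨w, hw⟩ hnn
    rw [hw] at hnn ⊢
    exact ⟨w.toNat, by rw [Int.toNat_of_nonneg (by linarith)]⟩
  obtain ⟨y0, hy0⟩ := hy (m 0) c0 hp0 hnn0
  obtain ⟨y1, hy1⟩ := hy (m 1) c1 hp1 hnn1
  obtain ⟨y2, hy2⟩ := hy (m 2) c2 hp2 hnn2
  have hl0' : (0 : ℤ) < (ℓ : ℤ) := by exact_mod_cast (by omega : 0 < ℓ)
  -- relation representatives u1 u2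
  have hu : ∀ AA : ℤ, ∃ u : ℕ, (u : ℤ) < ℓ ∧ (ℓ : ℤ) ∣ (A0 : ℤ) * u + AA := by
    intro AA
    have h1 : 0 ≤ (-AA) * B0 % ℓ := Int.emod_nonneg _ (by omega)
    refine ⟨((-AA) * B0 % ℓ).toNat, ?_, ?_⟩
    · rw [Int.toNat_of_nonneg h1]
      exact Int.emod_lt_of_pos _ hl0'
    · rw [Int.toNat_of_nonneg h1]
      have hU1 : ((-AA) * B0 % ℓ) ≡ (-AA) * B0 [ZMOD (ℓ : ℤ)] := Int.emod_emod_of_dvd _ dvd_rfl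
      have h3 : (A0 : ℤ) * ((-AA) * B0 % ℓ) + AA ≡ (A0 : ℤ) * ((-AA) * B0) + AA [ZMOD (ℓ : ℤ)] :=
        (hU1.mul_left _).add_right _
      have e : (A0 : ℤ) * ((-AA) * B0) + AA = (-AA) * ((A0 : ℤ) * B0) + AA := by ring
      have h4 : (-AA) * ((A0 : ℤ) * B0) + AA ≡ (-AA) * 1 + AA [ZMOD (ℓ : ℤ)] :=
        (hB0.mul_left _).add_right _
      have h5 := h3.trans (e ▸ h4)
      have e2 : (-AA) * 1 + AA = 0 := by ring
      rw [e2] at h5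
      exact (Int.modEq_zero_iff_dvd).mp h5
  obtain ⟨u1, hu1lt, hu1cong⟩ := hu (A1 : ℤ)
  obtain ⟨u2, hu2lt, hu2cong⟩ := hu (A2 : ℤ)
  -- the correction coefficient γ
  have hcd : (ℓ : ℤ) ∣ (A0 : ℤ) * c0 + (A1 : ℤ) * c1 + (A2 : ℤ) * c2 :=
    (Int.modEq_zero_iff_dvd).mp hcong
  have hD : (ℓ : ℤ) ∣ (c0 - c1 * (u1 : ℤ) - c2 * (u2 : ℤ)) := by
    have h1 : (ℓ : ℤ) ∣ (A0 : ℤ) * (c0 - c1 * (u1 : ℤ) - c2 * (u2 : ℤ)) := by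
      have e : (A0 : ℤ) * (c0 - c1 * (u1 : ℤ) - c2 * (u2 : ℤ))
          = ((A0 : ℤ) * c0 + (A1 : ℤ) * c1 + (A2 : ℤ) * c2)
            - c1 * ((A0 : ℤ) * u1 + A1) - c2 * ((A0 : ℤ) * u2 + A2) := by ring
      rw [e]
      exact dvd_sub (dvd_sub hcd (hu1cong.mul_left c1)) (hu2cong.mul_left c2)
    have hco : IsCoprime ((ℓ : ℕ) : ℤ) ((A0 : ℕ) : ℤ) :=
      (Nat.isCoprime_iff_coprime.mpr (hcop 0)).symm
    exact hco.dvd_of_dvd_mul_left h1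
  obtain ⟨γ, hγ⟩ := hD
  -- int version of hm
  have hmz : (m 0 : ℤ) • g 0 + (m 1 : ℤ) • g 1 + (m 2 : ℤ) • g 2 = 0 := by
    have := hm
    unfold IsBlock at this
    rw [Fin.sum_univ_three] at this
    rw [natCast_zsmul, natCast_zsmul, natCast_zsmul]
    exact this
  -- blocks
  have hq0block : IsBlock g ![y0, y1, y2] := by
    unfold IsBlock
    rw [Fin.sum_univ_three]
    simp only [Matrix.cons_val_zero, Matrix.cons_val_one, Matrix.head_cons,
      Matrix.cons_val_two, Matrix.tail_cons]
    apply hhalf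
    rw [smul_add, smul_add]
    rw [smul_smul, smul_smul, smul_smul]
    rw [show ((2 * y0 : ℕ)) • g 0 = ((2 * (y0 : ℤ))) • g 0 by rw [← natCast_zsmul]; norm_num]
    rw [show ((2 * y1 : ℕ)) • g 1 = ((2 * (y1 : ℤ))) • g 1 by rw [← natCast_zsmul]; norm_num]
    rw [show ((2 * y2 : ℕ)) • g 2 = ((2 * (y2 : ℤ))) • g 2 by rw [← natCast_zsmul]; norm_num]
    rw [hy0, hy1, hy2]
    have e0 : (σ * (m 0 : ℤ) + n * c0) • g 0 = σ • ((m 0 : ℤ) • g 0) + c0 • ((n : ℕ) • g 0) := by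
      rw [add_smul, mul_smul, mul_comm (n:ℤ) c0, mul_smul, natCast_zsmul (g 0) n]
    have e1 : (σ * (m 1 : ℤ) + n * c1) • g 1 = σ • ((m 1 : ℤ) • g 1) + c1 • ((n : ℕ) • g 1) := by
      rw [add_smul, mul_smul, mul_comm (n:ℤ) c1, mul_smul, natCast_zsmul (g 1) n]
    have e2 : (σ * (m 2 : ℤ) + n * c2) • g 2 = σ • ((m 2 : ℤ) • g 2) + c2 • ((n : ℕ) • g 2) := by
      rw [add_smul, mul_smul, mul_comm (n:ℤ) c2, mul_smul, natCast_zsmul (g 2) n]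
    rw [e0, e1, e2]
    have hk := hkey c0 c1 c2 hcd
    calc σ • ((m 0 : ℤ) • g 0) + c0 • (n • g 0) + (σ • ((m 1 : ℤ) • g 1) + c1 • (n • g 1))
          + (σ • ((m 2 : ℤ) • g 2) + c2 • (n • g 2))
        = σ • ((m 0 : ℤ) • g 0 + (m 1 : ℤ) • g 1 + (m 2 : ℤ) • g 2)
          + (c0 • (n • g 0) + c1 • (n • g 1) + c2 • (n • g 2)) := by
          rw [smul_add, smul_add]; abel
      _ = 0 := by rw [hmz, hk]; simp
  have hq1block : IsBlock g ![u1 * n, n, 0] := by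
    unfold IsBlock
    rw [Fin.sum_univ_three]
    simp only [Matrix.cons_val_zero, Matrix.cons_val_one, Matrix.head_cons,
      Matrix.cons_val_two, Matrix.tail_cons]
    have hk := hkey (u1 : ℤ) 1 0 (by
      have e : (A0 : ℤ) * (u1 : ℤ) + (A1 : ℤ) * 1 + (A2 : ℤ) * 0 = (A0 : ℤ) * u1 + A1 := by ring
      rw [e]; exact hu1cong)
    rw [one_smul, zero_smul, add_zero, natCast_zsmul] at hk
    rw [mul_smul, zero_smul, add_zero]
    exact hk
  have hq2block : IsBlock g ![u2 * n, 0, n] := by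
    unfold IsBlock
    rw [Fin.sum_univ_three]
    simp only [Matrix.cons_val_zero, Matrix.cons_val_one, Matrix.head_cons,
      Matrix.cons_val_two, Matrix.tail_cons]
    have hk := hkey (u2 : ℤ) 0 1 (by
      have e : (A0 : ℤ) * (u2 : ℤ) + (A1 : ℤ) * 0 + (A2 : ℤ) * 1 = (A0 : ℤ) * u2 + A2 := by ring
      rw [e]; exact hu2cong)
    rw [one_smul, zero_smul, natCast_zsmul, add_zero] at hk
    rw [mul_smul, zero_smul, add_zero]
    exact hk
  have hq3block : IsBlock g ![ℓ * n, 0, 0] := by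
    unfold IsBlock
    rw [Fin.sum_univ_three]
    simp only [Matrix.cons_val_zero, Matrix.cons_val_one, Matrix.head_cons,
      Matrix.cons_val_two, Matrix.tail_cons]
    rw [hNg 0, zero_smul, zero_smul]
    simp
    -- lengths
  have hsumy : 2 * ((y0 : ℤ) + y1 + y2) = σ * ((m 0 : ℤ) + m 1 + m 2) + n * (c0 + c1 + c2) := by
    linear_combination hy0 + hy1 + hy2
  have hq0lenZ : (y0 : ℤ) + y1 + y2 < (m 0 : ℤ) + m 1 + m 2 := by
    linarith [hsumy, hlength]
  have hq0len : y0 + y1 + y2 < ∑ i, m i := by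
    rw [Fin.sum_univ_three]
    exact_mod_cast hq0lenZ
  have hu1n : u1 < ℓ := by exact_mod_cast hu1lt
  have hu2n : u2 < ℓ := by exact_mod_cast hu2lt
  have hq1len : u1 * n + n + 0 < ∑ i, m i := by
    have h1 : u1 * n + n + 0 = (u1 + 1) * n := by ring
    rw [h1]
    exact lt_of_le_of_lt (Nat.mul_le_mul_right n (by omega)) hlen
  have hq2len : u2 * n + 0 + n < ∑ i, m i := by
    have h1 : u2 * n + 0 + n = (u2 + 1) * n := by ring
    rw [h1]
    exact lt_of_le_of_lt (Nat.mul_le_mul_right n (by omega)) hlen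
  have hq3len : ℓ * n + 0 + 0 < ∑ i, m i := by omega
  -- assemble the witness
  refine ⟨4, ![2 * σ, -σ * c1, -σ * c2, -σ * γ],
    ![![y0, y1, y2], ![u1 * n, n, 0], ![u2 * n, 0, n], ![ℓ * n, 0, 0]], ?_, ?_⟩
  · intro j
    fin_cases j
    · exact ⟨hq0block, by
        rw [Fin.sum_univ_three]
        simpa using hq0len⟩
    · exact ⟨hq1block, by
        rw [Fin.sum_univ_three]
        simpa using hq1len⟩
    · exact ⟨hq2block, by
        rw [Fin.sum_univ_three]
        simpa using hq2len⟩
    · exact ⟨hq3block, by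
        rw [Fin.sum_univ_three]
        simpa using hq3len⟩
  · intro i
    fin_cases i
    · rw [Fin.sum_univ_four]
      simp [Matrix.vecHead, Matrix.vecTail]
      push_cast
      first
      | linear_combination (-σ) * hy0 + (-(m 0 : ℤ)) * hσ2 + (-σ * (n : ℤ)) * hγ
      | linear_combination σ * hy0 + (m 0 : ℤ) * hσ2 + σ * (n : ℤ) * hγ
    · rw [Fin.sum_univ_four]
      simp [Matrix.vecHead, Matrix.vecTail]
      push_cast
      first
      | linear_combination (-σ) * hy1 + (-(m 1 : ℤ)) * hσ2
      | linear_combination σ * hy1 + (m 1 : ℤ) * hσ2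
    · rw [Fin.sum_univ_four]
      simp [Matrix.vecHead, Matrix.vecTail]
      push_cast
      first
      | linear_combination (-σ) * hy2 + (-(m 2 : ℤ)) * hσ2
      | linear_combination σ * hy2 + (m 2 : ℤ) * hσ2
end

section
/- Let G = C_{n1} ⊕ … ⊕ C_{nr} with nr ∣ … ∣ n1, r ≥ 2, ℓ := n1/n2 > 1 and n := n2, and suppose ℓn is even. Let g1,g2,g3 ∈ G with ord(gi) = ℓn for i = 1,2,3. Then every group atom m in B(g1,g2,g3) satisfies |m| ≤ ℓn + n/p, where p is the smallest prime divisor of n. -/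
open Finset

lemma exists_unit_bound (n : ℕ) (hn : 2 ≤ n) (m : Fin 3 → ℕ) :
    ∃ x x' : ℕ, (x * x') % n = 1 % n ∧ ∑ i, (x * m i) % n ≤ n + n / n.minFac := by
  haveI : NeZero n := ⟨by omega⟩
  obtain ⟨np, hnp⟩ : ∃ np, n / n.minFac = np := ⟨_, rfl⟩
  rw [hnp]
  suffices h : ∃ u : (ZMod n)ˣ,
      (∑ i, ((u : ZMod n) * (m i : ZMod n)).val) ≤ n + np by
    obtain ⟨u, hu⟩ := h
    refine ⟨(u : ZMod n).val, ((u⁻¹ : (ZMod n)ˣ) : ZMod n).val, ?_, ?_⟩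
    · rw [← ZMod.natCast_eq_natCast_iff']
      push_cast [ZMod.natCast_val, ZMod.cast_id]
      exact_mod_cast u.mul_inv
    · have he : ∀ i : Fin 3, ((u : ZMod n).val * m i) % n
          = ((u : ZMod n) * (m i : ZMod n)).val := by
        intro i
        rw [ZMod.val_mul, ZMod.val_natCast, Nat.mul_mod,
          Nat.mod_eq_of_lt (ZMod.val_lt _)]
      calc ∑ i, ((u : ZMod n).val * m i) % n
          = ∑ i, ((u : ZMod n) * (m i : ZMod n)).val := by
            exact Finset.sum_congr rfl fun i _ => he i
        _ ≤ n + np := hu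
  -- pairing helper
  have hpair : ∀ (u : (ZMod n)ˣ) (a : ZMod n), a ≠ 0 →
      ((u : ZMod n) * a).val + ((-(u : ZMod n)) * a).val = n := by
    intro u a ha
    have h0 : (u : ZMod n) * a ≠ 0 := by
      simpa [Units.mul_right_eq_zero] using ha
    rw [neg_mul, ZMod.neg_val, if_neg h0]
    have h1 := ZMod.val_lt ((u : ZMod n) * a)
    omega
  have hple : ∀ (u : (ZMod n)ˣ) (a : ZMod n),
      ((u : ZMod n) * a).val + ((-(u : ZMod n)) * a).val ≤ n := by
    intro u a
    by_cases ha : a = 0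
    · simp [ha]
    · exact le_of_eq (hpair u a ha)
  by_cases hz : ∃ i, (m i : ZMod n) = 0
  · -- some coordinate ≡ 0 : use 1 or -1
    obtain ⟨i0, hi0⟩ := hz
    by_cases hg : (∑ i, ((1 : ZMod n) * (m i : ZMod n)).val) ≤ n + np
    · exact ⟨1, by simpa using hg⟩
    · refine ⟨-1, ?_⟩
      have hcoe : ((-1 : (ZMod n)ˣ) : ZMod n) = -(1 : ZMod n) := by
        simp
      rw [hcoe]
      rw [Fin.sum_univ_three] at hg ⊢
      have h0 := hple 1 (m 0 : ZMod n)
      have h1 := hple 1 (m 1 : ZMod n)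
      have h2 := hple 1 (m 2 : ZMod n)
      simp only [Units.val_one] at h0 h1 h2
      have hi3 : i0 = 0 ∨ i0 = 1 ∨ i0 = 2 := by
        rcases i0 with ⟨iv, hlt⟩
        interval_cases iv <;> simp [Fin.ext_iff]
      rcases hi3 with h | h | h <;> subst h <;> rw [hi0] at hg ⊢ <;>
        simp only [mul_zero, ZMod.val_zero] at hg ⊢ <;> omega
  · push_neg at hz
    set S : ZMod n := ∑ i, (m i : ZMod n) with hS
    -- congruence of sums
    have hcong : ∀ u : (ZMod n)ˣ,
        (∑ i, ((u : ZMod n) * (m i : ZMod n)).val) % n = ((u : ZMod n) * S).val % n := by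
      intro u
      rw [← ZMod.natCast_eq_natCast_iff']
      push_cast [ZMod.natCast_val, ZMod.cast_id]
      rw [← Finset.mul_sum]
    -- bounds
    have hbounds : ∀ u : (ZMod n)ˣ, 3 ≤ (∑ i, ((u : ZMod n) * (m i : ZMod n)).val) ∧
        (∑ i, ((u : ZMod n) * (m i : ZMod n)).val) ≤ 3 * n - 3 := by
      intro u
      have hb : ∀ i : Fin 3, 1 ≤ ((u : ZMod n) * (m i : ZMod n)).val ∧
          ((u : ZMod n) * (m i : ZMod n)).val ≤ n - 1 := by
        intro i
        have h0 : (u : ZMod n) * (m i : ZMod n) ≠ 0 := by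
          simpa [Units.mul_right_eq_zero] using hz i
        have h1 := ZMod.val_lt ((u : ZMod n) * (m i : ZMod n))
        have h2 := ZMod.val_pos.2 h0
        omega
      rw [Fin.sum_univ_three]
      have h0 := hb 0; have h1 := hb 1; have h2 := hb 2
      omega
    have hpairsum : ∀ u : (ZMod n)ˣ,
        (∑ i, ((u : ZMod n) * (m i : ZMod n)).val)
        + (∑ i, ((-(u : ZMod n)) * (m i : ZMod n)).val) = 3 * n := by
      intro u
      rw [Fin.sum_univ_three, Fin.sum_univ_three]
      have h0 := hpair u (m 0 : ZMod n) (hz 0)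
      have h1 := hpair u (m 1 : ZMod n) (hz 1)
      have h2 := hpair u (m 2 : ZMod n) (hz 2)
      omega
    -- produce u, d with (u*S).val = d, d ≤ n / p, d < n
    have hkey : ∃ (u : (ZMod n)ˣ) (d : ℕ), d ≤ np ∧ d < n ∧
        ((u : ZMod n) * S).val = d := by
      by_cases hS0 : S = 0
      · exact ⟨1, 0, Nat.zero_le _, by omega, by simp [hS0]⟩
      · have hSv1 : 1 ≤ S.val := ZMod.val_pos.2 hS0
        have hSvn : S.val < n := ZMod.val_lt S
        set d := Nat.gcd S.val n with hd
        have hdn : d ∣ n := Nat.gcd_dvd_right _ _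
        have hdS : d ∣ S.val := Nat.gcd_dvd_left _ _
        have hd1 : 1 ≤ d := Nat.gcd_pos_of_pos_left _ (by omega)
        have hdlt : d < n := lt_of_le_of_lt (Nat.le_of_dvd (by omega) hdS) hSvn
        have hmul : d * (n / d) = n := Nat.mul_div_cancel' hdn
        have hnd2 : 2 ≤ n / d := by
          rcases Nat.lt_or_ge (n / d) 2 with h | h
          · interval_cases h' : (n / d) <;> omega
          · exact h
        haveI : NeZero (n / d) := ⟨by omega⟩
        have hdp : d ≤ np := by
          rw [← hnp]
          have h3 : (n / d).minFac ∣ n := dvd_trans (Nat.minFac_dvd _) (Nat.div_dvd_of_dvd hdn)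
          have h4 : n.minFac ≤ (n / d).minFac :=
            Nat.minFac_le_of_dvd (Nat.minFac_prime (by omega)).two_le h3
          have h5 : (n / d).minFac ≤ n / d := Nat.minFac_le (by omega)
          rw [Nat.le_div_iff_mul_le (Nat.minFac_pos n)]
          calc d * n.minFac ≤ d * (n / d) := Nat.mul_le_mul_left _ (le_trans h4 h5)
            _ = n := hmul
        set s₁ := S.val / d with hs₁
        have hds₁ : d * s₁ = S.val := Nat.mul_div_cancel' hdS
        have hcop : Nat.Coprime s₁ (n / d) := by
          have := Nat.coprime_div_gcd_div_gcd (m := S.val) (n := n) (by omega)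
          simpa [← hd] using this
        obtain ⟨u, hu_map⟩ := ZMod.unitsMap_surjective (Nat.div_dvd_of_dvd hdn)
          (ZMod.unitOfCoprime s₁ hcop)⁻¹
        refine ⟨u, d, hdp, hdlt, ?_⟩
        set v := (u : ZMod n).val with hv
        have hvs : (v * s₁) % (n / d) = 1 % (n / d) := by
          rw [← ZMod.natCast_eq_natCast_iff']
          push_cast
          have h7 : ((v : ℕ) : ZMod (n / d))
              = (((ZMod.unitOfCoprime s₁ hcop)⁻¹ : (ZMod (n / d))ˣ) : ZMod (n / d)) := by
            have h8 := congrArg (Units.val) hu_map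
            rw [ZMod.unitsMap] at h8
            simp only [Units.coe_map, MonoidHom.coe_coe] at h8
            rw [ZMod.castHom_apply] at h8
            rw [hv, ZMod.natCast_val]
            exact h8
          rw [h7]
          have h9 : ((s₁ : ℕ) : ZMod (n / d))
              = ((ZMod.unitOfCoprime s₁ hcop : (ZMod (n / d))ˣ) : ZMod (n / d)) :=
            (ZMod.coe_unitOfCoprime s₁ hcop).symm
          rw [h9, ← Units.val_mul, inv_mul_cancel, Units.val_one]
        have h8 : (v * S.val) % n = d % n := by
          have h9 := Nat.ModEq.mul_left' (c := d) hvs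
          rw [hmul] at h9
          calc (v * S.val) % n = (d * (v * s₁)) % n := by
                rw [← hds₁]; ring_nf
            _ = (d * 1) % n := h9
            _ = d % n := by rw [mul_one]
        have h10 : (u : ZMod n) * S = ((v * S.val : ℕ) : ZMod n) := by
          push_cast
          rw [hv, ZMod.natCast_val, ZMod.cast_id, ZMod.natCast_val, ZMod.cast_id]
        rw [h10, ZMod.val_natCast, h8, Nat.mod_eq_of_lt (by omega)]
    obtain ⟨u, d, hdp, hdlt, hval⟩ := hkey
    by_cases hgu : (∑ i, ((u : ZMod n) * (m i : ZMod n)).val) ≤ n + np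
    · exact ⟨u, hgu⟩
    · refine ⟨-u, ?_⟩
      have hcoe : ((-u : (ZMod n)ˣ) : ZMod n) = -(u : ZMod n) := Units.val_neg u
      rw [hcoe]
      set g1 := (∑ i, ((u : ZMod n) * (m i : ZMod n)).val) with hg1
      have hc := hcong u
      rw [hval, Nat.mod_eq_of_lt hdlt] at hc
      have hb := hbounds u
      have hps := hpairsum u
      -- g1 = n * (g1/n) + d, with g1/n = 2
      have hdm := Nat.div_add_mod g1 n
      rw [hc] at hdm
      have hK3 : g1 / n < 3 := by
        rw [Nat.div_lt_iff_lt_mul (by omega)]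
        omega
      have hK2 : 1 < g1 / n := by
        by_contra hK
        push_neg at hK
        have : n * (g1 / n) ≤ n * 1 := Nat.mul_le_mul_left _ hK
        omega
      have hg1eq : g1 = 2 * n + d := by
        have : g1 / n = 2 := by omega
        rw [this] at hdm
        omega
      omega

theorem stmt_13 {H : Type*} [AddCommGroup H] [Fintype H]
    (ℓ n : ℕ) (hℓ : 1 < ℓ) (hn : 2 ≤ n)
    (hexp : AddMonoid.exponent H = n)
    (heven : Even (ℓ * n))
    (g : Fin 3 → ZMod (ℓ * n) × H)
    (hord : ∀ i, addOrderOf (g i) = ℓ * n)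
    (m : Fin 3 → ℕ) (hm : IsGroupAtom g m) :
    ∑ i, m i ≤ ℓ * n + n / n.minFac := by
  obtain ⟨hblock, hatom⟩ := hm
  by_contra hcon
  push_neg at hcon
  apply hatom
  have hn0 : 0 < n := by omega
  have hl0 : 0 < ℓ := by omega
  haveI : NeZero (ℓ * n) := ⟨by positivity⟩
  set γ : ZMod (ℓ * n) × H := n • g 0 with hγ
  set ζ : ZMod (ℓ * n) × H := ((n : ZMod (ℓ * n)), 0) with hζ
  -- n • g j lies in the cyclic group generated by ζ
  have hng : ∀ j, n • g j = ((g j).1.val) • ζ := by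
    intro j
    have h2 : n • (g j).2 = 0 := by
      have h2' := AddMonoid.exponent_nsmul_eq_zero (g j).2
      rwa [hexp] at h2'
    have h1 : n • (g j).1 = ((g j).1.val) • (n : ZMod (ℓ * n)) := by
      rw [nsmul_eq_mul, nsmul_eq_mul, ZMod.natCast_val, ZMod.cast_id]
      exact mul_comm _ _
    have h3 : n • g j = (n • (g j).1, n • (g j).2) := rfl
    have h4 : ((g j).1.val) • ζ = (((g j).1.val) • (n : ZMod (ℓ * n)), (0 : H)) := by
      rw [hζ, Prod.smul_mk, smul_zero]
    rw [h3, h4, h1, h2]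
  have hζℓ : ℓ • ζ = 0 := by
    rw [hζ, Prod.smul_mk, smul_zero]
    have h0 : ℓ • (n : ZMod (ℓ * n)) = 0 := by
      rw [nsmul_eq_mul, ← Nat.cast_mul, ZMod.natCast_self]
    rw [h0]
    rfl
  have hNg : ∀ j, (ℓ * n) • g j = 0 := fun j => by
    have h0 := addOrderOf_nsmul_eq_zero (g j)
    rwa [hord j] at h0
  have hdagger : ∀ c : ℕ, c • γ = 0 → ℓ ∣ c := by
    intro c hc
    have h1 : (c * n) • g 0 = 0 := by
      rw [mul_comm c n, mul_nsmul]; exact hc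
    have h2 : (ℓ * n) ∣ (c * n) := by
      have h3 := addOrderOf_dvd_of_nsmul_eq_zero h1
      rwa [hord 0] at h3
    exact (Nat.mul_dvd_mul_iff_right hn0).1 h2
  have hℓγ : ℓ • γ = 0 := by
    rw [hγ, ← mul_nsmul, mul_comm n ℓ]
    exact hNg 0
  set v : ℕ := (g 0).1.val with hv
  have hγζ : γ = v • ζ := hng 0
  have hcop : Nat.Coprime v ℓ := by
    set dd := Nat.gcd v ℓ with hdd
    have hd1 : dd ∣ v := Nat.gcd_dvd_left _ _
    have hd2 : dd ∣ ℓ := Nat.gcd_dvd_right _ _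
    have hddpos : 0 < dd := Nat.gcd_pos_of_pos_right _ (by omega)
    have h1 : (ℓ / dd) • γ = 0 := by
      rw [hγζ, ← mul_nsmul]
      have he : v * (ℓ / dd) = ℓ * (v / dd) := by
        obtain ⟨v', hv'⟩ := hd1
        obtain ⟨l', hl'⟩ := hd2
        rw [hv', hl', Nat.mul_div_cancel_left _ hddpos, Nat.mul_div_cancel_left _ hddpos]
        ring
      rw [he, mul_nsmul, hζℓ, smul_zero]
    have h2 := hdagger _ h1
    obtain ⟨l', hl'⟩ := hd2
    have hl'0 : 0 < l' := by
      rcases Nat.eq_zero_or_pos l' with h | h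
      · subst h; omega
      · exact h
    rw [hl', Nat.mul_div_cancel_left _ hddpos] at h2
    have h3 := Nat.le_of_dvd hl'0 h2
    have h4 : dd ≤ 1 := by
      by_contra h5
      push_neg at h5
      have := Nat.mul_le_mul_right l' h5
      omega
    have : dd = 1 := by omega
    exact this
  obtain ⟨A, hA⟩ : ∃ A : ℤ, ζ = A • γ := by
    refine ⟨Nat.gcdA v ℓ, ?_⟩
    have hb := Nat.gcd_eq_gcd_ab v ℓ
    rw [hcop] at hb
    have h0 : ζ = ((1 : ℤ)) • ζ := (one_zsmul _).symm
    rw [h0]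
    rw [show (1 : ℤ) = (v : ℤ) * Nat.gcdA v ℓ + (ℓ : ℤ) * Nat.gcdB v ℓ by exact_mod_cast hb]
    rw [add_zsmul, mul_comm (v:ℤ), mul_comm (ℓ:ℤ), mul_zsmul, mul_zsmul]
    rw [natCast_zsmul, natCast_zsmul, ← hγζ, hζℓ, smul_zero, add_zero]
  have hngz : ∀ j, ∃ zj : ℤ, n • g j = zj • γ := by
    intro j
    refine ⟨((g j).1.val : ℤ) * A, ?_⟩
    rw [hng j, ← natCast_zsmul, hA, mul_zsmul]
  obtain ⟨z1, hz1⟩ := hngz 1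
  obtain ⟨z2, hz2⟩ := hngz 2
  have hzγ : ∀ w : ℤ, (ℓ : ℤ) ∣ w → w • γ = 0 := by
    rintro w ⟨u, rfl⟩
    rw [mul_comm ((ℓ:ℤ)) u, mul_zsmul, natCast_zsmul, hℓγ, smul_zero]
  have hpick : ∀ x : ZMod (ℓ * n) × H, (∃ z : ℤ, x = z • γ) →
      ∃ c : ℕ, c < ℓ ∧ x + c • γ = 0 := by
    rintro x ⟨z, rfl⟩
    have hl0' : (0:ℤ) < (ℓ:ℤ) := by exact_mod_cast hl0
    have h0 : (0:ℤ) ≤ (-z) % ℓ := Int.emod_nonneg _ (by omega)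
    have h1 : (-z) % ℓ < ℓ := Int.emod_lt_of_pos _ hl0'
    refine ⟨((-z) % ℓ).toNat, by omega, ?_⟩
    rw [← natCast_zsmul, Int.toNat_of_nonneg h0, ← add_zsmul]
    apply hzγ
    refine ⟨-((-z) / ℓ), ?_⟩
    rw [Int.emod_def]
    ring
  obtain ⟨x, x', hxx', hsum⟩ := exists_unit_bound n hn m
  set w' : Fin 3 → ℕ := fun i => (x * m i) % n with hw'
  set kk : Fin 3 → ℕ := fun i => (x * m i) / n with hkk
  have hxm : ∑ i, (x * m i) • g i = 0 := by
    calc ∑ i, (x * m i) • g i = ∑ i, x • (m i • g i) := by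
          exact Finset.sum_congr rfl fun i _ => by rw [mul_comm x (m i), mul_nsmul]
      _ = x • ∑ i, m i • g i := by rw [Finset.smul_sum]
      _ = 0 := by rw [hblock, smul_zero]
  have hsplit : ∑ i, (w' i) • g i + ∑ i, (kk i) • (n • g i) = 0 := by
    rw [← hxm, ← Finset.sum_add_distrib]
    refine Finset.sum_congr rfl fun i _ => ?_
    rw [← mul_nsmul, ← add_nsmul]
    congr 1
    exact Nat.mod_add_div (x * m i) n
  obtain ⟨b, hblt, hbγ⟩ : ∃ b : ℕ, b < ℓ ∧ (∑ i, (w' i) • g i) + b • γ = 0 := by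
    apply hpick
    refine ⟨-((kk 0 : ℤ) + (kk 1) * z1 + (kk 2) * z2), ?_⟩
    have h1 : ∑ i, (kk i) • (n • g i)
        = ((kk 0 : ℤ) + (kk 1) * z1 + (kk 2) * z2) • γ := by
      rw [Fin.sum_univ_three, hz1, hz2, ← hγ]
      rw [add_zsmul, add_zsmul, mul_zsmul, mul_zsmul]
      rw [natCast_zsmul, natCast_zsmul, natCast_zsmul]
    have h2 := hsplit
    rw [h1] at h2
    rw [neg_zsmul]
    exact eq_neg_of_add_eq_zero_left h2
  obtain ⟨c1, hc1lt, hc1⟩ := hpick _ ⟨z1, hz1⟩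
  obtain ⟨c2, hc2lt, hc2⟩ := hpick _ ⟨z2, hz2⟩
  -- the four blocks
  set q : Fin 3 → ℕ := ![w' 0 + n * b, w' 1, w' 2] with hqdef
  set B1 : Fin 3 → ℕ := ![n * c1, n, 0] with hB1def
  set B2 : Fin 3 → ℕ := ![n * c2, 0, n] with hB2def
  set D : Fin 3 → ℕ := ![ℓ * n, 0, 0] with hDdef
  have hq_block : IsBlock g q := by
    show ∑ i, (q i) • g i = 0
    rw [Fin.sum_univ_three]
    have e0 : q 0 = w' 0 + n * b := rfl
    have e1 : q 1 = w' 1 := rfl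
    have e2 : q 2 = w' 2 := rfl
    rw [e0, e1, e2, add_nsmul, mul_nsmul, ← hγ]
    have hre : w' 0 • g 0 + b • γ + w' 1 • g 1 + w' 2 • g 2
        = (w' 0 • g 0 + w' 1 • g 1 + w' 2 • g 2) + b • γ := by abel
    calc w' 0 • g 0 + b • γ + (w' 1 • g 1) + (w' 2 • g 2)
        = (w' 0 • g 0 + w' 1 • g 1 + w' 2 • g 2) + b • γ := by abel
      _ = (∑ i, (w' i) • g i) + b • γ := by rw [Fin.sum_univ_three]
      _ = 0 := hbγ
  have hB1_block : IsBlock g B1 := by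
    show ∑ i, (B1 i) • g i = 0
    rw [Fin.sum_univ_three]
    have e0 : B1 0 = n * c1 := rfl
    have e1 : B1 1 = n := rfl
    have e2 : B1 2 = 0 := rfl
    rw [e0, e1, e2, mul_nsmul, ← hγ, zero_nsmul, add_zero, add_comm]
    exact hc1
  have hB2_block : IsBlock g B2 := by
    show ∑ i, (B2 i) • g i = 0
    rw [Fin.sum_univ_three]
    have e0 : B2 0 = n * c2 := rfl
    have e1 : B2 1 = 0 := rfl
    have e2 : B2 2 = n := rfl
    rw [e0, e1, e2, mul_nsmul, ← hγ, zero_nsmul, add_zero, add_comm]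
    exact hc2
  have hD_block : IsBlock g D := by
    show ∑ i, (D i) • g i = 0
    rw [Fin.sum_univ_three]
    have e0 : D 0 = ℓ * n := rfl
    have e1 : D 1 = 0 := rfl
    have e2 : D 2 = 0 := rfl
    rw [e0, e1, e2, zero_nsmul, zero_nsmul, add_zero, add_zero]
    exact hNg 0
  -- integer coefficients
  have hqmod : ∀ i : Fin 3, (q i) % n = (x * m i) % n := by
    intro i
    have h3 : i = 0 ∨ i = 1 ∨ i = 2 := by omega
    rcases h3 with h | h | h <;> subst h
    · show (w' 0 + n * b) % n = (x * m 0) % n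
      rw [mul_comm n b, Nat.add_mul_mod_self_right]
      exact Nat.mod_mod_of_dvd _ dvd_rfl
    · show (w' 1) % n = (x * m 1) % n
      exact Nat.mod_mod_of_dvd _ dvd_rfl
    · show (w' 2) % n = (x * m 2) % n
      exact Nat.mod_mod_of_dvd _ dvd_rfl
  have hdvd : ∀ i : Fin 3, (n:ℤ) ∣ ((m i : ℤ) - (x' : ℤ) * (q i : ℤ)) := by
    intro i
    have hmod1 : Nat.ModEq n (x * x') 1 := hxx'
    have hd1 : (n:ℤ) ∣ (1 : ℤ) - ((x * x' : ℕ) : ℤ) := (Nat.modEq_iff_dvd).1 hmod1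
    have hmod2 : Nat.ModEq n (q i) (x * m i) := hqmod i
    have hd2 : (n:ℤ) ∣ ((x * m i : ℕ) : ℤ) - ((q i : ℕ) : ℤ) := (Nat.modEq_iff_dvd).1 hmod2
    have key : ((m i : ℤ) - (x' : ℤ) * (q i : ℤ))
        = (m i : ℤ) * ((1:ℤ) - ((x * x' : ℕ) : ℤ))
          + (x' : ℤ) * (((x * m i : ℕ) : ℤ) - ((q i : ℕ) : ℤ)) := by
      push_cast
      ring
    rw [key]
    exact dvd_add (Dvd.dvd.mul_left hd1 _) (Dvd.dvd.mul_left hd2 _)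
  set y : Fin 3 → ℤ := fun i => ((m i : ℤ) - (x' : ℤ) * (q i : ℤ)) / n with hy
  have hyeq : ∀ i : Fin 3, (m i : ℤ) = (x' : ℤ) * (q i : ℤ) + (n : ℤ) * y i := by
    intro i
    rw [hy]
    rw [Int.mul_ediv_cancel' (hdvd i)]
    ring
  -- integer block identities
  have hmz : ∑ i, (m i : ℤ) • g i = 0 := by
    calc ∑ i, (m i : ℤ) • g i = ∑ i, (m i) • g i := by
          exact Finset.sum_congr rfl fun i _ => natCast_zsmul _ _
      _ = 0 := hblock
  have hqz : ∑ i, (q i : ℤ) • g i = 0 := by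
    calc ∑ i, (q i : ℤ) • g i = ∑ i, (q i) • g i := by
          exact Finset.sum_congr rfl fun i _ => natCast_zsmul _ _
      _ = 0 := hq_block
  have hyg : ∑ i, y i • (n • g i) = 0 := by
    have h1 : ∀ i : Fin 3, y i • (n • g i) = ((n : ℤ) * y i) • g i := by
      intro i
      rw [← natCast_zsmul (g i) n, smul_smul, mul_comm (y i) ((n:ℤ))]
    have h2 : ∀ i : Fin 3, ((n : ℤ) * y i) • g i = (m i : ℤ) • g i - (x' : ℤ) • ((q i : ℤ) • g i) := by
      intro i
      have h2' : (n:ℤ) * y i = (m i : ℤ) - (x':ℤ) * (q i : ℤ) := by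
        have := hyeq i
        linarith
      rw [h2', sub_zsmul, smul_smul]
      abel
    calc ∑ i, y i • (n • g i) = ∑ i, ((m i : ℤ) • g i - (x' : ℤ) • ((q i : ℤ) • g i)) := by
          exact Finset.sum_congr rfl fun i _ => by rw [h1 i, h2 i]
      _ = ∑ i, (m i : ℤ) • g i - (x' : ℤ) • ∑ i, ((q i : ℤ) • g i) := by
          rw [Finset.sum_sub_distrib, Finset.smul_sum]
      _ = 0 := by rw [hmz, hqz, smul_zero, sub_zero]
  set t : ℤ := y 0 - y 1 * (c1 : ℤ) - y 2 * (c2 : ℤ) with ht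
  have htγ : t • γ = 0 := by
    have h1 : n • g 1 = -(((c1 : ℕ) : ℤ) • γ) := by
      rw [natCast_zsmul]
      exact eq_neg_of_add_eq_zero_left hc1
    have h2 : n • g 2 = -(((c2 : ℕ) : ℤ) • γ) := by
      rw [natCast_zsmul]
      exact eq_neg_of_add_eq_zero_left hc2
    have h3 := hyg
    rw [Fin.sum_univ_three, h1, h2, ← hγ] at h3
    have h4 : t • γ = y 0 • γ + y 1 • -(((c1:ℕ):ℤ) • γ) + y 2 • -(((c2:ℕ):ℤ) • γ) := by
      rw [smul_neg, smul_neg, ht, sub_zsmul, sub_zsmul, mul_zsmul, mul_zsmul]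
    rw [h4]
    exact h3
  have hdvdt : (ℓ : ℤ) ∣ t := by
    have h1 : ((t % ℓ).toNat) • γ = 0 := by
      have h2 : (t % ℓ) • γ = 0 := by
        have h3 : t % ℓ = t - (ℓ:ℤ) * (t / ℓ) := by
          rw [Int.emod_def]
        rw [h3, sub_zsmul, htγ, mul_comm ((ℓ:ℤ)) (t / (ℓ:ℤ)), mul_zsmul, natCast_zsmul, hℓγ,
          smul_zero]
        abel
      have h4 : (0:ℤ) ≤ t % ℓ := Int.emod_nonneg _ (by exact_mod_cast hl0.ne')
      rw [← natCast_zsmul, Int.toNat_of_nonneg h4]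
      exact h2
    have h5 := hdagger _ h1
    have h6 : (t % ℓ).toNat < ℓ := by
      have := Int.emod_lt_of_pos t (show (0:ℤ) < (ℓ:ℤ) by exact_mod_cast hl0)
      omega
    have h7 : (t % ℓ).toNat = 0 := by
      rcases Nat.eq_zero_or_pos ((t % ℓ).toNat) with h | h
      · exact h
      · exact absurd (Nat.le_of_dvd h h5) (by omega)
    have h8 : t % ℓ = 0 := by
      have h4 : (0:ℤ) ≤ t % ℓ := Int.emod_nonneg _ (by exact_mod_cast hl0.ne')
      omega
    exact Int.dvd_of_emod_eq_zero h8
  set T : ℤ := t / ℓ with hT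
  have hTeq : (ℓ : ℤ) * T = t := Int.mul_ediv_cancel' hdvdt
  -- length bounds
  have hwsum : w' 0 + w' 1 + w' 2 ≤ n + n / n.minFac := by
    have := hsum
    rwa [show univ.sum w' = w' 0 + w' 1 + w' 2 from Fin.sum_univ_three w'] at this
  have hnl : n * ℓ = ℓ * n := mul_comm n ℓ
  have hqlen : ∑ i, q i ≤ ℓ * n + n / n.minFac := by
    rw [Fin.sum_univ_three]
    have e0 : q 0 = w' 0 + n * b := rfl
    have e1 : q 1 = w' 1 := rfl
    have e2 : q 2 = w' 2 := rfl
    rw [e0, e1, e2]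
    have hb1 : n * b + n ≤ ℓ * n := by
      calc n * b + n = n * (b + 1) := by ring
        _ ≤ n * ℓ := Nat.mul_le_mul_left _ (by omega)
        _ = ℓ * n := hnl
    omega
  have hB1len : ∑ i, B1 i ≤ ℓ * n := by
    rw [Fin.sum_univ_three]
    have e0 : B1 0 = n * c1 := rfl
    have e1 : B1 1 = n := rfl
    have e2 : B1 2 = 0 := rfl
    rw [e0, e1, e2]
    have hb1 : n * c1 + n ≤ ℓ * n := by
      calc n * c1 + n = n * (c1 + 1) := by ring
        _ ≤ n * ℓ := Nat.mul_le_mul_left _ (by omega)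
        _ = ℓ * n := hnl
    omega
  have hB2len : ∑ i, B2 i ≤ ℓ * n := by
    rw [Fin.sum_univ_three]
    have e0 : B2 0 = n * c2 := rfl
    have e1 : B2 1 = 0 := rfl
    have e2 : B2 2 = n := rfl
    rw [e0, e1, e2]
    have hb1 : n * c2 + n ≤ ℓ * n := by
      calc n * c2 + n = n * (c2 + 1) := by ring
        _ ≤ n * ℓ := Nat.mul_le_mul_left _ (by omega)
        _ = ℓ * n := hnl
    omega
  have hDlen : ∑ i, D i = ℓ * n := by
    rw [Fin.sum_univ_three]
    show ℓ * n + 0 + 0 = ℓ * n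
    omega
  -- final witness
  refine ⟨4, ![(x' : ℤ), y 1, y 2, T], ![q, B1, B2, D], ?_, ?_⟩
  · intro j
    have hj : j = 0 ∨ j = 1 ∨ j = 2 ∨ j = 3 := by omega
    rcases hj with h | h | h | h <;> subst h
    · exact ⟨hq_block, by simpa using lt_of_le_of_lt hqlen hcon⟩
    · exact ⟨hB1_block, by simpa using lt_of_le_of_lt (le_trans hB1len (Nat.le_add_right _ _)) hcon⟩
    · exact ⟨hB2_block, by simpa using lt_of_le_of_lt (le_trans hB2len (Nat.le_add_right _ _)) hcon⟩
    · exact ⟨hD_block, by simpa using lt_of_le_of_lt (le_trans (le_of_eq hDlen) (Nat.le_add_right _ _)) hcon⟩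
  · intro i
    have hy0 : y 0 = y 1 * (c1:ℤ) + y 2 * (c2:ℤ) + (ℓ:ℤ) * T := by
      rw [hTeq, ht]; ring
    have hi : i = 0 ∨ i = 1 ∨ i = 2 := by omega
    rcases hi with h | h | h <;> subst h
    · show ((m 0 : ℕ) : ℤ) = ∑ j : Fin 4, ![(x' : ℤ), y 1, y 2, T] j * (![q, B1, B2, D] j 0 : ℤ)
      rw [Fin.sum_univ_four]
      show ((m 0 : ℕ) : ℤ) = (x' : ℤ) * ((w' 0 + n * b : ℕ) : ℤ) + y 1 * ((n * c1 : ℕ) : ℤ)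
        + y 2 * ((n * c2 : ℕ) : ℤ) + T * ((ℓ * n : ℕ) : ℤ)
      have h1 := hyeq 0
      have e0 : ((q 0 : ℕ) : ℤ) = ((w' 0 + n * b : ℕ) : ℤ) := rfl
      rw [← e0]
      rw [h1, hy0]
      push_cast
      ring
    · show ((m 1 : ℕ) : ℤ) = ∑ j : Fin 4, ![(x' : ℤ), y 1, y 2, T] j * (![q, B1, B2, D] j 1 : ℤ)
      rw [Fin.sum_univ_four]
      show ((m 1 : ℕ) : ℤ) = (x' : ℤ) * ((q 1 : ℕ) : ℤ) + y 1 * ((n : ℕ) : ℤ)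
        + y 2 * ((0 : ℕ) : ℤ) + T * ((0 : ℕ) : ℤ)
      rw [hyeq 1]
      push_cast
      ring
    · show ((m 2 : ℕ) : ℤ) = ∑ j : Fin 4, ![(x' : ℤ), y 1, y 2, T] j * (![q, B1, B2, D] j 2 : ℤ)
      rw [Fin.sum_univ_four]
      show ((m 2 : ℕ) : ℤ) = (x' : ℤ) * ((q 2 : ℕ) : ℤ) + y 1 * ((0 : ℕ) : ℤ)
        + y 2 * ((n : ℕ) : ℤ) + T * ((0 : ℕ) : ℤ)
      rw [hyeq 2]
      push_cast
      ring
end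

section
/- Let ℓ ≥ 1, n ≥ 2 be integers and p the smallest prime divisor of n. In the group G = C_{ℓn} ⊕ C_n there exist elements g1, g2, g3 and a group atom m in B(g1,g2,g3) with |m| = ℓn + n/p. -/
open Finset

theorem stmt_15 (ℓ n : ℕ) (hℓ : 1 ≤ ℓ) (hn : 2 ≤ n) :
    ∃ (g : Fin 3 → ZMod (ℓ * n) × ZMod n) (m : Fin 3 → ℕ),
      IsGroupAtom g m ∧ ∑ i, m i = ℓ * n + n / n.minFac := by
  set p := n.minFac with hp
  have hpprime : p.Prime := Nat.minFac_prime (by omega)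
  have hp2 : 2 ≤ p := hpprime.two_le
  have hpdvd : p ∣ n := Nat.minFac_dvd n
  set s := n / p with hs
  have hsp : s * p = n := Nat.div_mul_cancel hpdvd
  have hs1 : 1 ≤ s := Nat.div_pos (Nat.minFac_le (by omega)) (by omega)
  have hsn : s < n := by nlinarith
  have hln : 1 ≤ ℓ * n := by nlinarith
  haveI : NeZero (ℓ * n) := ⟨by omega⟩
  haveI : NeZero n := ⟨by omega⟩
  refine ⟨![(0, 1), (1, 0), (1, (s : ZMod n))], ![s, 1, ℓ * n - 1], ⟨?_, ?_⟩, ?_⟩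
  · -- m is a block
    show _ = _
    rw [Fin.sum_univ_three]
    simp only [Matrix.cons_val_zero, Matrix.cons_val_one, Matrix.head_cons,
      Matrix.cons_val_two, Matrix.tail_cons, Prod.smul_mk, smul_zero]
    ext
    · simp only [Prod.fst_add, Prod.fst_zero, smul_eq_mul, nsmul_eq_mul, mul_one, mul_zero]
      push_cast
      have : ((1 : ℕ) : ZMod (ℓ * n)) + ((ℓ * n - 1 : ℕ) : ZMod (ℓ * n))
          = ((ℓ * n : ℕ) : ZMod (ℓ * n)) := by
        rw [← Nat.cast_add]; congr 1; omega
      simpa using this.trans (by simp)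
    · simp only [Prod.snd_add, Prod.snd_zero, nsmul_eq_mul, mul_zero, mul_one]
      have heq : ((s : ℕ) : ZMod n) + 0 + ((ℓ * n - 1 : ℕ) : ZMod n) * ((s : ℕ) : ZMod n)
          = ((s + (ℓ * n - 1) * s : ℕ) : ZMod n) := by push_cast; ring
      rw [heq, ZMod.natCast_eq_zero_iff]
      have : s + (ℓ * n - 1) * s = ℓ * (s * n) := by
        have : ℓ * n - 1 + 1 = ℓ * n := by omega
        nlinarith [this]
      rw [this]
      exact Dvd.dvd.mul_left (Dvd.dvd.mul_left dvd_rfl s) ℓ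
  · -- atomicity
    rintro ⟨t, lam, q, hq, hcomb⟩
    -- key: every short block has n ∣ q j 0
    have key : ∀ j, (n : ℤ) ∣ (q j 0 : ℤ) := by
      intro j
      obtain ⟨hblock, hlen⟩ := hq j
      have hlen' : q j 0 + q j 1 + q j 2 < ℓ * n + s := by
        have := hlen
        rw [Fin.sum_univ_three, Fin.sum_univ_three] at this
        simp [Matrix.cons_val_zero, Matrix.cons_val_one, Matrix.head_cons] at this
        omega
      -- extract the two component conditions
      have hb := hblock
      unfold IsBlock at hb
      rw [Fin.sum_univ_three] at hb
      simp only [Matrix.cons_val_zero, Matrix.cons_val_one, Matrix.head_cons,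
        Matrix.cons_val_two, Matrix.tail_cons, Prod.smul_mk, smul_zero] at hb
      have h1 : ((q j 1 + q j 2 : ℕ) : ZMod (ℓ * n)) = 0 := by
        have := congrArg Prod.fst hb
        simp only [Prod.fst_add, Prod.fst_zero, nsmul_eq_mul, mul_zero, mul_one] at this
        push_cast
        simpa using this
      have h2 : ((q j 0 + q j 2 * s : ℕ) : ZMod n) = 0 := by
        have := congrArg Prod.snd hb
        simp only [Prod.snd_add, Prod.snd_zero, nsmul_eq_mul, mul_zero, mul_one] at this
        push_cast
        linear_combination this
      rw [ZMod.natCast_eq_zero_iff] at h1 h2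
      have hdvd0 : n ∣ q j 0 := by
        rcases Nat.eq_zero_or_pos (q j 1 + q j 2) with h | h
        · have h20 : q j 2 = 0 := by omega
          rw [h20] at h2; simpa using h2
        · have hge : ℓ * n ≤ q j 1 + q j 2 := Nat.le_of_dvd h h1
          have h0s : q j 0 < s := by omega
          have hsd : s ∣ q j 0 := by
            have : s ∣ q j 0 + q j 2 * s := dvd_trans ⟨p, hsp.symm⟩ h2
            exact (Nat.dvd_add_right (Dvd.dvd.mul_left dvd_rfl (q j 2))).mp
              (by rwa [Nat.add_comm] at this)
          simp [Nat.eq_zero_of_dvd_of_lt hsd h0s]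
      exact_mod_cast Int.natCast_dvd_natCast.mpr hdvd0
    have h0 := hcomb 0
    simp only [Matrix.cons_val_zero] at h0
    have : (n : ℤ) ∣ (s : ℤ) := by
      rw [h0]
      exact Finset.dvd_sum fun j _ => Dvd.dvd.mul_left (key j) _
    have : n ∣ s := by exact_mod_cast this
    have := Nat.le_of_dvd (by omega) this
    omega
  · rw [Fin.sum_univ_three]
    simp only [Matrix.cons_val_zero, Matrix.cons_val_one, Matrix.head_cons,
      Matrix.cons_val_two, Matrix.tail_cons]
    omega
end

section
/- Let G be a finite abelian group of odd order, g1, g2 ∈ G with ord(g1) = ord(g2) = N, and suppose n ∣ N with ℓ := N/n > 1 and that n·g1 and n·g2 generate the same cyclic subgroup of order ℓ. Then there exist x, y ∈ {1,…,ℓ−1} such that [xn, n] ∈ B(g1,g2) and [n, yn] ∈ B(g1,g2), and each of these elements has length at most ℓn. -/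
open Finset

/-- Helper: if `b` is a nonzero element of the cyclic subgroup generated by `a`,
of order `ℓ`, then `x • a + b = 0` for some `1 ≤ x ≤ ℓ - 1`. -/
lemma exists_nsmul_add_eq_zero {G : Type*} [AddCommGroup G] {a b : G} {ℓ : ℕ}
    (hℓ : 0 < ℓ) (ha : addOrderOf a = ℓ) (hb : b ∈ AddSubgroup.zmultiples a) (hb0 : b ≠ 0) :
    ∃ x : ℕ, 1 ≤ x ∧ x ≤ ℓ - 1 ∧ x • a + b = 0 := by
  obtain ⟨z, rfl⟩ := hb
  have hℓa : (ℓ : ℤ) • a = 0 := by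
    rw [← ha]; exact_mod_cast addOrderOf_nsmul_eq_zero a
  set r : ℤ := (-z) % (ℓ : ℤ) with hr
  have hrnn : 0 ≤ r := Int.emod_nonneg _ (by exact_mod_cast hℓ.ne')
  have hrlt : r < (ℓ : ℤ) := Int.emod_lt_of_pos _ (by exact_mod_cast hℓ)
  have hra : r • a = (-z) • a := by
    conv_rhs => rw [← Int.emod_add_mul_ediv (-z) (ℓ : ℤ)]
    rw [add_smul, mul_comm, mul_smul, hℓa, smul_zero, add_zero]
  refine ⟨r.toNat, ?_, ?_, ?_⟩
  · by_contra h
    have hr0 : r = 0 := by omega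
    have h0 : (-z) • a = 0 := by rw [← hra, hr0, zero_smul]
    rw [neg_smul, neg_eq_zero] at h0
    exact hb0 h0
  · omega
  · rw [← natCast_zsmul, Int.toNat_of_nonneg hrnn, hra, neg_smul, neg_add_cancel]

theorem stmt_17 {G : Type*} [AddCommGroup G] [Fintype G] (hodd : Odd (Fintype.card G))
    (g1 g2 : G) (N n ℓ : ℕ) (hord1 : addOrderOf g1 = N) (hord2 : addOrderOf g2 = N)
    (hn : n ∣ N) (hℓdef : ℓ = N / n) (hℓ : 1 < ℓ)
    (hgen : AddSubgroup.zmultiples (n • g1) = AddSubgroup.zmultiples (n • g2))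
    (hordn : addOrderOf (n • g1) = ℓ) :
    ∃ x y : ℕ, 1 ≤ x ∧ x ≤ ℓ - 1 ∧ 1 ≤ y ∧ y ≤ ℓ - 1 ∧
      IsBlock ![g1, g2] ![x * n, n] ∧ IsBlock ![g1, g2] ![n, y * n] ∧
      x * n + n ≤ ℓ * n ∧ n + y * n ≤ ℓ * n := by
  have hNpos : 0 < N := hord1 ▸ addOrderOf_pos g1
  have hnpos : 0 < n := by
    rcases Nat.eq_zero_or_pos n with h | h
    · subst h; simp at hℓdef; omega
    · exact h
  have hN : N = n * ℓ := by
    rw [hℓdef, Nat.mul_div_cancel' hn]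
  have hnN : n < N := by nlinarith
  -- n • g2 ≠ 0
  have hg2n : n • g2 ≠ 0 := by
    intro h
    have := addOrderOf_dvd_of_nsmul_eq_zero h
    rw [hord2] at this
    exact absurd (Nat.le_of_dvd hnpos this) (by omega)
  have hg1n : n • g1 ≠ 0 := by
    intro h
    have := addOrderOf_dvd_of_nsmul_eq_zero h
    rw [hord1] at this
    exact absurd (Nat.le_of_dvd hnpos this) (by omega)
  have hordn2 : addOrderOf (n • g2) = ℓ := by
    rw [addOrderOf_nsmul, hord2, Nat.gcd_eq_right hn, hN,
      Nat.mul_div_cancel_left _ hnpos]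
  have hmem2 : n • g2 ∈ AddSubgroup.zmultiples (n • g1) := by
    rw [hgen]; exact AddSubgroup.mem_zmultiples _
  have hmem1 : n • g1 ∈ AddSubgroup.zmultiples (n • g2) := by
    rw [← hgen]; exact AddSubgroup.mem_zmultiples _
  obtain ⟨x, hx1, hx2, hx⟩ :=
    exists_nsmul_add_eq_zero (by omega) hordn hmem2 hg2n
  obtain ⟨y, hy1, hy2, hy⟩ :=
    exists_nsmul_add_eq_zero (by omega) hordn2 hmem1 hg1n
  refine ⟨x, y, hx1, hx2, hy1, hy2, ?_, ?_, ?_, ?_⟩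
  · show ∑ i, (![x * n, n] i) • (![g1, g2] i) = 0
    rw [Fin.sum_univ_two]
    simp only [Matrix.cons_val_zero, Matrix.cons_val_one, Matrix.head_cons]
    rw [mul_smul]
    exact hx
  · show ∑ i, (![n, y * n] i) • (![g1, g2] i) = 0
    rw [Fin.sum_univ_two]
    simp only [Matrix.cons_val_zero, Matrix.cons_val_one, Matrix.head_cons]
    rw [mul_smul, add_comm]
    exact hy
  · have hx' : x + 1 ≤ ℓ := by omega
    calc x * n + n = (x + 1) * n := by ring
      _ ≤ ℓ * n := Nat.mul_le_mul_right n hx'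
  · have hy' : y + 1 ≤ ℓ := by omega
    calc n + y * n = (y + 1) * n := by ring
      _ ≤ ℓ * n := Nat.mul_le_mul_right n hy'
end
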